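/- arXiv:2411.05241 — 5 statements merged into one kernel-verified Lean document; each statement's English description precedes it below -/
import Mathlib

section
/- Let T be an ω₁-tree that is not special, let C ⊆ ω₁ be a club, and let G be a T-graph with cofinal ω-sequences C(T,v) assigned to each node v at a limit level. Then there exist α ∈ C, a node v ∈ T^α, and countably many nodes u_n > v (n ∈ ω) such that the set ⋃_{n∈ω} C(T,u_n) ∩ {t : t < v} is infinite. -/
noncomputable def omega1 : Ordinal := (Cardinal.aleph 1).ord

/-- An order tree: a partial order with a least element (root), whose strict
down-sets are chains and whose strict order is well-founded (hence every
down-set is well-ordered). -/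
def IsOrderTree (T : Type*) [PartialOrder T] : Prop :=
  (∃ r : T, ∀ t, r ≤ t) ∧ (∀ t : T, IsChain (· ≤ ·) {s | s < t}) ∧ WellFoundedLT T

/-- `ht` is the height (rank) function of the tree: the height of a node is the
supremum of the successors of the heights of the nodes strictly below it; for an
order tree this is the order type of its strict down-set. -/
def IsHeightFun {T : Type*} [PartialOrder T] (ht : T → Ordinal) : Prop :=
  ∀ t, ht t = sSup ((fun s => ht s + 1) '' {s | s < t})

/-- An `ω₁`-tree: height `ω₁` and all levels countable. -/
def IsOmegaOneTree {T : Type*} [PartialOrder T] (ht : T → Ordinal) : Prop :=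
  (∀ t, ht t < omega1) ∧ (∀ o < omega1, ∃ t, ht t = o) ∧
  (∀ o : Ordinal, {t | ht t = o}.Countable)

/-- An Aronszajn tree has no uncountable branch (chain). -/
def NoUncountableBranch (T : Type*) [PartialOrder T] : Prop :=
  ∀ B : Set T, IsChain (· ≤ ·) B → B.Countable

/-- A tree is special if it is a countable union of antichains. -/
def IsSpecialTree (T : Type*) [PartialOrder T] : Prop :=
  ∃ A : ℕ → Set T, (∀ n, IsAntichain (· ≤ ·) (A n)) ∧ (⋃ n, A n) = Set.univ

/-- A successor node: its strict down-set has a maximum. -/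
def IsSuccNode {T : Type*} [PartialOrder T] (t : T) : Prop :=
  ∃ m, m < t ∧ ∀ s, s < t → s ≤ m

def IsClubIn (C : Set Ordinal) : Prop :=
  C ⊆ Set.Iio omega1 ∧
  (∀ a < omega1, ∃ b ∈ C, a ≤ b) ∧
  (∀ β < omega1, 0 < β → sSup (C ∩ Set.Iio β) = β → β ∈ C)

/-! If the conclusion fails, then for every node `v` on a positive level in `C` the ladder
points below `v` of the nodes above `v` form a finite set, so their heights are bounded by some
`γ v < ht v`. Stepping down from `v` to the largest positive level of `C` not above `γ v` is
then a regressive map on the club levels whose fibres meet every branch in a finite set.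
Recording the ranks of `v` and of its iterated steps in their fibres colours the club levels
with countably many colours so that comparable nodes get different colours, and since the gaps
between consecutive levels of `C` are countable, `T` is special. -/

open Set Order

universe u v

section TreeHeight

variable {T : Type u} [PartialOrder T] {ht : T → Ordinal.{v}}

theorem IsHeightFun.strictMono [Small.{v} T] (hht : IsHeightFun ht) : StrictMono ht := by
  intro s t hst
  have h : ht s + 1 ≤ ht t := by
    rw [hht t]
    exact le_csSup Ordinal.bddAbove_of_small ⟨s, hst, rfl⟩
  rwa [add_one_le_iff] at h

theorem IsHeightFun.exists_le_eq [WellFoundedLT T] (hht : IsHeightFun ht) (w : T) :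
    ∀ β ≤ ht w, ∃ x ≤ w, ht x = β := by
  induction w using WellFoundedLT.induction with
  | _ w IH =>
  intro β hβ
  rcases hβ.eq_or_lt with rfl | hβ
  · exact ⟨w, le_rfl, rfl⟩
  rw [hht w] at hβ
  obtain ⟨_, ⟨s, hsw, rfl⟩, hβs⟩ := exists_lt_of_lt_csSup' hβ
  obtain ⟨x, hxs, rfl⟩ := IH s hsw β (lt_add_one_iff.mp hβs)
  exact ⟨x, hxs.trans hsw.le, rfl⟩

open Classical in
noncomputable def ancestor (ht : T → Ordinal) (w : T) (β : Ordinal) : T :=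
  if h : ∃ x ≤ w, ht x = β then h.choose else w

theorem ancestor_le_and_ht_eq [WellFoundedLT T] (hht : IsHeightFun ht) {w : T} {β : Ordinal}
    (hβ : β ≤ ht w) : ancestor ht w β ≤ w ∧ ht (ancestor ht w β) = β := by
  have h := hht.exists_le_eq w β hβ
  rw [ancestor, dif_pos h]
  exact h.choose_spec

theorem le_total_of_le_of_le (hchain : ∀ t : T, IsChain (· ≤ ·) {s | s < t}) {x y w : T}
    (hx : x ≤ w) (hy : y ≤ w) : x ≤ y ∨ y ≤ x := by
  rcases hx.eq_or_lt with rfl | hx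
  · exact .inr hy
  rcases hy.eq_or_lt with rfl | hy
  · exact .inl hx.le
  rcases eq_or_ne x y with rfl | hxy
  · exact .inl le_rfl
  · exact hchain w hx hy hxy

theorem IsHeightFun.lt_of_ht_lt [Small.{v} T] (hht : IsHeightFun ht)
    (hchain : ∀ t : T, IsChain (· ≤ ·) {s | s < t}) {x y w : T} (hx : x ≤ w) (hy : y ≤ w)
    (h : ht x < ht y) : x < y := by
  rcases le_total_of_le_of_le hchain hx hy with hxy | hyx
  · exact hxy.lt_of_ne (ne_of_apply_ne ht h.ne)
  · exact absurd (hht.strictMono.monotone hyx) h.not_ge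

theorem IsHeightFun.injOn_Iic [Small.{v} T] (hht : IsHeightFun ht)
    (hchain : ∀ t : T, IsChain (· ≤ ·) {s | s < t}) (w : T) : InjOn ht (Iic w) := by
  intro x hx y hy hxy
  rcases le_total_of_le_of_le hchain hx hy with h | h
  · exact h.eq_of_not_lt fun h' => (hht.strictMono h').ne hxy
  · exact (h.eq_of_not_lt fun h' => (hht.strictMono h').ne hxy.symm).symm

end TreeHeight

section Ordinals

theorem Ordinal.countable_Iio_of_lt_omega1 {β : Ordinal} (h : β < omega1) :
    (Iio β).Countable := by
  rw [← Cardinal.le_aleph0_iff_set_countable, Cardinal.mk_Iio_ordinal, Cardinal.lift_le_aleph0]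
  rw [omega1, Cardinal.lt_ord] at h
  exact Cardinal.lt_aleph_one_iff.mp h

theorem Ordinal.exists_isSuccLimit_accumulation {H : Set Ordinal} (hH : H.Infinite)
    {b : Ordinal} (hb : ∀ η ∈ H, η ≤ b) :
    ∃ δ ≤ b, IsSuccLimit δ ∧ ∀ γ < δ, ∃ η ∈ H, γ < η ∧ η < δ := by
  have hne : {δ | (H ∩ Iio δ).Infinite}.Nonempty :=
    ⟨succ b, hH.mono fun η hη => ⟨hη, lt_succ_iff.mpr (hb η hη)⟩⟩
  set δ := sInf {δ | (H ∩ Iio δ).Infinite}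
  have hδ : (H ∩ Iio δ).Infinite := csInf_mem hne
  have hcof : ∀ γ < δ, ∃ η ∈ H, γ < η ∧ η < δ := by
    intro γ hγ
    have hfin : (H ∩ Iio γ).Finite := not_not.mp (notMem_of_lt_csInf' hγ)
    have : (H ∩ Iic γ).Finite :=
      (hfin.union (finite_singleton γ)).subset fun η ⟨hη, hηγ⟩ =>
        hηγ.lt_or_eq.elim (fun h => .inl ⟨hη, h⟩) .inr
    obtain ⟨η, ⟨hη, hηδ⟩, hηγ⟩ := (hδ.sdiff this).nonempty
    exact ⟨η, hη, not_le.mp fun h => hηγ ⟨hη, h⟩, hηδ⟩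
  refine ⟨δ, not_lt.mp fun hbδ => ?_, ?_, hcof⟩
  · obtain ⟨η, hη, hbη, -⟩ := hcof b hbδ
    exact (hb η hη).not_gt hbη
  · obtain ⟨η, -, hηδ⟩ := hδ.nonempty
    refine ⟨not_isMin_of_lt hηδ, isSuccPrelimit_of_succ_lt fun γ hγ => ?_⟩
    obtain ⟨η, -, hγη, hηδ⟩ := hcof γ hγ
    exact (succ_le_of_lt hγη).trans_lt hηδ

theorem Ordinal.sSup_lt_of_finite {s : Set Ordinal} (hs : s.Finite) {a : Ordinal} (ha : 0 < a)
    (h : ∀ x ∈ s, x < a) : sSup s < a := by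
  rcases s.eq_empty_or_nonempty with rfl | hne
  · rwa [csSup_empty]
  · exact (hs.csSup_lt_iff hne).mpr h

end Ordinals

section Club

theorem IsClubIn.sSup_mem {C : Set Ordinal} (hC : IsClubIn C) {D : Set Ordinal} (hDC : D ⊆ C)
    (hD : D.Nonempty) (hlt : sSup D < omega1) : sSup D ∈ C := by
  have hbdd : BddAbove D := ⟨omega1, fun α hα => (hC.1 (hDC hα)).le⟩
  by_cases hmem : sSup D ∈ D
  · exact hDC hmem
  have hlt_sup : ∀ α ∈ D, α < sSup D := fun α hα =>
    (le_csSup hbdd hα).lt_of_ne fun h => hmem (h ▸ hα)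
  obtain ⟨α, hα⟩ := hD
  refine hC.2.2 _ hlt (zero_le.trans_lt (hlt_sup α hα)) (le_antisymm ?_ ?_)
  · exact csSup_le ⟨α, hDC hα, hlt_sup α hα⟩ fun β hβ => hβ.2.le
  · exact csSup_le_csSup ⟨omega1, fun β hβ => (hC.1 hβ.1).le⟩ ⟨α, hα⟩
      fun β hβ => ⟨hDC hβ, hlt_sup β hβ⟩

/-- The largest positive element of `C` below `β`, and `0` if there is none. -/
noncomputable def clubFloor (C : Set Ordinal) (β : Ordinal) : Ordinal :=
  sSup {α | α ∈ C ∧ 0 < α ∧ α ≤ β}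

variable {C : Set Ordinal}

theorem clubFloor_le (β : Ordinal) : clubFloor C β ≤ β :=
  csSup_le' fun _ hα => hα.2.2

theorem le_clubFloor {α β : Ordinal} (hC : α ∈ C) (hpos : 0 < α) (hαβ : α ≤ β) :
    α ≤ clubFloor C β :=
  le_csSup ⟨β, fun _ hα => hα.2.2⟩ ⟨hC, hpos, hαβ⟩

theorem clubFloor_mono : Monotone (clubFloor C) := fun _ _ h =>
  csSup_le_csSup' ⟨_, fun _ hα => hα.2.2⟩ fun _ hα => ⟨hα.1, hα.2.1, hα.2.2.trans h⟩

theorem IsClubIn.clubFloor_mem (hC : IsClubIn C) {β : Ordinal} (hβ : β < omega1)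
    (hpos : 0 < clubFloor C β) : clubFloor C β ∈ C := by
  refine hC.sSup_mem (fun α hα => hα.1) ?_ ((clubFloor_le β).trans_lt hβ)
  by_contra hemp
  rw [clubFloor, not_nonempty_iff_eq_empty.mp hemp, csSup_empty] at hpos
  exact hpos.false

theorem IsClubIn.countable_clubFloor_fiber (hC : IsClubIn C) (α : Ordinal) :
    {β | β < omega1 ∧ clubFloor C β = α}.Countable := by
  rcases eq_empty_or_nonempty {β | β < omega1 ∧ clubFloor C β = α} with h | ⟨β₀, hβ₀, rfl⟩
  · exact h ▸ countable_empty
  have hsucc : succ (clubFloor C β₀) < omega1 :=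
    (Cardinal.isSuccLimit_ord (Cardinal.aleph0_le_aleph 1)).succ_lt
      ((clubFloor_le β₀).trans_lt hβ₀)
  obtain ⟨b, hbC, hb⟩ := hC.2.1 _ hsucc
  have hb : clubFloor C β₀ < b := succ_le_iff.mp hb
  refine (Ordinal.countable_Iio_of_lt_omega1 (hC.1 hbC)).mono fun β hβ => ?_
  by_contra! hbβ
  exact (le_clubFloor hbC (zero_le.trans_lt hb) (not_lt.mp hbβ)).not_gt (hβ.2 ▸ hb)

end Club

section Special

variable {T : Type u} [PartialOrder T]

theorem isSpecialTree_of_coloring {β : Type*} [Countable β] (col : T → β)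
    (hcol : ∀ a b, a < b → col a ≠ col b) : IsSpecialTree T := by
  obtain ⟨e, he⟩ := exists_injective_nat β
  refine ⟨fun n => {t | e (col t) = n}, fun n a ha b hb hne hab => ?_,
    iUnion_eq_univ_iff.mpr fun t => ⟨_, rfl⟩⟩
  exact hcol a b (hab.lt_of_ne hne) (he (ha.trans hb.symm))

def clubLevels (ht : T → Ordinal) (C : Set Ordinal) : Set T :=
  {v | ht v ∈ C ∧ 0 < ht v}

theorem ancestor_clubFloor_mem_clubLevels {ht : T → Ordinal.{v}} [WellFoundedLT T]
    (hht : IsHeightFun ht) {C : Set Ordinal} (hC : IsClubIn C) {w : T} {β : Ordinal}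
    (hβw : β ≤ ht w) (hβ : β < omega1) (hpos : 0 < clubFloor C β) :
    ancestor ht w (clubFloor C β) ∈ clubLevels ht C := by
  obtain ⟨-, h⟩ := ancestor_le_and_ht_eq hht ((clubFloor_le (C := C) β).trans hβw)
  refine ⟨?_, ?_⟩ <;> rw [h]
  exacts [hC.clubFloor_mem hβ hpos, hpos]

theorem isSpecialTree_of_clubLevels_coloring {ht : T → Ordinal.{v}} [WellFoundedLT T]
    [Small.{v} T] (hht : IsHeightFun ht) (hchain : ∀ t : T, IsChain (· ≤ ·) {s | s < t})
    (hlt : ∀ t, ht t < omega1) {C : Set Ordinal} (hC : IsClubIn C) {β : Type*} [Countable β]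
    (κ : T → β) (hκ : ∀ x ∈ clubLevels ht C, ∀ y ∈ clubLevels ht C, x < y → κ x ≠ κ y) :
    IsSpecialTree T := by
  choose code hcode using fun α =>
    countable_iff_exists_injOn.mp (hC.countable_clubFloor_fiber α)
  -- nodes with the same club floor have heights in one countable gap of `C`, told apart by `code`
  let col : T → Option β × ℕ := fun t =>
    (if 0 < clubFloor C (ht t) then some (κ (ancestor ht t (clubFloor C (ht t)))) else none,
      code (clubFloor C (ht t)) (ht t))
  refine isSpecialTree_of_coloring col fun a b hab heq => ?_
  obtain ⟨hκab, hcode_ab⟩ := Prod.mk.inj heq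
  rcases (clubFloor_mono (hht.strictMono hab).le).eq_or_lt with hfl | hfl
  · rw [← hfl] at hcode_ab
    exact (hht.strictMono hab).ne (hcode _ ⟨hlt a, rfl⟩ ⟨hlt b, hfl.symm⟩ hcode_ab)
  have hposb : 0 < clubFloor C (ht b) := zero_le.trans_lt hfl
  by_cases hposa : 0 < clubFloor C (ht a)
  · rw [if_pos hposa, if_pos hposb, Option.some_inj] at hκab
    obtain ⟨hva, hhta⟩ := ancestor_le_and_ht_eq hht (clubFloor_le (ht a))
    obtain ⟨hvb, hhtb⟩ := ancestor_le_and_ht_eq hht (clubFloor_le (ht b))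
    refine hκ _ (ancestor_clubFloor_mem_clubLevels hht hC le_rfl (hlt a) hposa)
      _ (ancestor_clubFloor_mem_clubLevels hht hC le_rfl (hlt b) hposb) ?_ hκab
    exact hht.lt_of_ht_lt hchain (hva.trans hab.le) hvb (by rwa [hhta, hhtb])
  · rw [if_neg hposa, if_pos hposb] at hκab
    nomatch hκab

end Special

section RegressiveMap

variable {T : Type*} [PartialOrder T] (V : Set T) (f : T → Option T)

noncomputable def fiberRank (v : T) : ℕ :=
  {x | x ∈ V ∧ x < v ∧ f x = f v}.ncard

open Classical in
noncomputable def fiberWord [WellFoundedLT T] : T → List ℕ :=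
  wellFounded_lt.fix fun v IH =>
    fiberRank V f v :: match f v with
      | none => []
      | some y => if h : y < v then IH y h else []

variable {V f}

theorem fiberRank_lt_fiberRank
    (hfin : ∀ o w, {x | x ∈ V ∧ x ≤ w ∧ f x = o}.Finite) {x v : T} (hx : x ∈ V)
    (hxv : x < v)
    (h : f x = f v) : fiberRank V f x < fiberRank V f v := by
  refine ncard_lt_ncard ⟨fun z hz => ⟨hz.1, hz.2.1.trans hxv, hz.2.2.trans h⟩,
    fun hsub => (hsub ⟨hx, hxv, h⟩).2.1.false⟩ ?_
  exact (hfin (f v) v).subset fun z hz => ⟨hz.1, hz.2.1.le, hz.2.2⟩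

variable [WellFoundedLT T]

theorem head?_fiberWord (v : T) : (fiberWord V f v).head? = some (fiberRank V f v) := by
  rw [fiberWord, WellFounded.fix_eq]
  rfl

theorem fiberWord_ne_nil (v : T) : fiberWord V f v ≠ [] :=
  List.ne_nil_of_mem (List.mem_of_mem_head? (head?_fiberWord v))

theorem fiberWord_of_none {v : T} (h : f v = none) : fiberWord V f v = [fiberRank V f v] := by
  rw [fiberWord, WellFounded.fix_eq, h]

theorem fiberWord_of_some {v y : T} (h : f v = some y) (hy : y < v) :
    fiberWord V f v = fiberRank V f v :: fiberWord V f y := by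
  rw [fiberWord, WellFounded.fix_eq, h]
  simp only [hy, dif_pos]

theorem fiberWord_ne_of_lt (hchain : ∀ t : T, IsChain (· ≤ ·) {s | s < t})
    (hf : ∀ v ∈ V, ∀ y ∈ f v, y ∈ V ∧ y < v)
    (hfin : ∀ o w, {x | x ∈ V ∧ x ≤ w ∧ f x = o}.Finite) {x v : T} (hx : x ∈ V)
    (hv : v ∈ V) (hxv : x < v) : fiberWord V f x ≠ fiberWord V f v := by
  induction v using WellFoundedLT.induction generalizing x with
  | _ v IH =>
  intro heq
  by_cases hst : f x = f v
  · refine (fiberRank_lt_fiberRank hfin hx hxv hst).ne (Option.some_inj.mp ?_)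
    rw [← head?_fiberWord, ← head?_fiberWord, heq]
  rcases hfx : f x with _ | y' <;> rcases hfv : f v with _ | y
  · exact hst (hfx.trans hfv.symm)
  · rw [fiberWord_of_none hfx, fiberWord_of_some hfv (hf v hv y hfv).2] at heq
    exact fiberWord_ne_nil y (List.cons.inj heq).2.symm
  · rw [fiberWord_of_some hfx (hf x hx y' hfx).2, fiberWord_of_none hfv] at heq
    exact fiberWord_ne_nil y' (List.cons.inj heq).2
  · rw [fiberWord_of_some hfx (hf x hx y' hfx).2, fiberWord_of_some hfv (hf v hv y hfv).2] at heq
    obtain ⟨hy'V, hy'x⟩ := hf x hx y' hfx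
    obtain ⟨hyV, hyv⟩ := hf v hv y hfv
    have hne : y' ≠ y := fun h => hst (by rw [hfx, hfv, h])
    have htail := (List.cons.inj heq).2
    rcases le_total_of_le_of_le hchain (hy'x.trans hxv).le hyv.le with h | h
    · exact IH y hyv hy'V hyV (h.lt_of_ne hne) htail
    · exact IH y' (hy'x.trans hxv) hyV hy'V (h.lt_of_ne hne.symm) htail.symm

end RegressiveMap

section LadderStep

variable {T : Type u} [PartialOrder T] {ht : T → Ordinal.{v}} {C : Set Ordinal}
  {γ : T → Ordinal}

noncomputable def ladderStep (ht : T → Ordinal) (C : Set Ordinal) (γ : T → Ordinal) (v : T) :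
    Option T :=
  if 0 < clubFloor C (γ v) then some (ancestor ht v (clubFloor C (γ v))) else none

variable [WellFoundedLT T]

theorem ladderStep_spec (hht : IsHeightFun ht) (hlt : ∀ t, ht t < omega1) (hC : IsClubIn C)
    (hγ_lt : ∀ v ∈ clubLevels ht C, γ v < ht v) :
    ∀ v ∈ clubLevels ht C, ∀ y ∈ ladderStep ht C γ v, y ∈ clubLevels ht C ∧ y < v := by
  intro v hv y hy
  unfold ladderStep at hy
  split_ifs at hy with hpos
  · obtain rfl := Option.mem_some_iff.mp hy
    have hγv := hγ_lt v hv
    refine ⟨ancestor_clubFloor_mem_clubLevels hht hC hγv.le (hγv.trans (hlt v)) hpos, ?_⟩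
    obtain ⟨hle, hht_eq⟩ := ancestor_le_and_ht_eq hht ((clubFloor_le (C := C) _).trans hγv.le)
    exact hle.lt_of_ne fun h =>
      ((clubFloor_le _).trans_lt hγv).ne (hht_eq.symm.trans (congrArg ht h))
  · exact absurd hy (Option.not_mem_none y)

theorem ladderStep_ne (hht : IsHeightFun ht) (hγ_lt : ∀ v ∈ clubLevels ht C, γ v < ht v)
    {x y : T} (hx : x ∈ clubLevels ht C) (hy : y ∈ clubLevels ht C) (h : ht x ≤ γ y) :
    ladderStep ht C γ x ≠ ladderStep ht C γ y := by
  have hxy : ht x ≤ clubFloor C (γ y) := le_clubFloor hx.1 hx.2 h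
  intro heq
  rw [ladderStep, ladderStep, if_pos (hx.2.trans_le hxy)] at heq
  split_ifs at heq
  have hγx := hγ_lt x hx
  have hfl := congrArg ht (Option.some_inj.mp heq)
  rw [(ancestor_le_and_ht_eq hht ((clubFloor_le _).trans hγx.le)).2,
    (ancestor_le_and_ht_eq hht ((clubFloor_le _).trans (hγ_lt y hy).le)).2] at hfl
  exact ((clubFloor_le _).trans_lt hγx).not_ge (hfl ▸ hxy)

variable [Small.{v} T]

/-- If a branch contained infinitely many nodes with the same step, the ladder of the node at the
first limit of their heights would climb through them; a ladder point `p` between two of them,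
`x₁ ≤ p < x`, forces `ht x₁ ≤ γ x`, which separates their steps. -/
theorem finite_ladderStep_fiber (hht : IsHeightFun ht)
    (hchain : ∀ t : T, IsChain (· ≤ ·) {s | s < t}) {c : T → ℕ → T}
    (hc : ∀ u, IsSuccLimit (ht u) → ∀ n, c u n < u)
    (hccof : ∀ u, IsSuccLimit (ht u) → ∀ s, s < u → ∃ n, s ≤ c u n)
    (hγ_lt : ∀ v ∈ clubLevels ht C, γ v < ht v)
    (hγ : ∀ v ∈ clubLevels ht C, ∀ u, v < u → IsSuccLimit (ht u) → ∀ n, c u n < v →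
      ht (c u n) ≤ γ v)
    (o : Option T) (w : T) :
    {x | x ∈ clubLevels ht C ∧ x ≤ w ∧ ladderStep ht C γ x = o}.Finite := by
  by_contra hinf
  set F := {x | x ∈ clubLevels ht C ∧ x ≤ w ∧ ladderStep ht C γ x = o}
  have hH : (ht '' F).Infinite :=
    (Set.not_finite.mp hinf).image ((hht.injOn_Iic hchain w).mono fun x hx => hx.2.1)
  obtain ⟨δ, hδw, hδ, hcof⟩ := Ordinal.exists_isSuccLimit_accumulation hH
    (b := ht w) (by rintro _ ⟨x, hx, rfl⟩; exact hht.strictMono.monotone hx.2.1)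
  obtain ⟨huw, hu⟩ := ancestor_le_and_ht_eq hht hδw
  set u := ancestor ht w δ
  have hlt_u : ∀ x ∈ F, ht x < δ → x < u := fun x hx hxδ =>
    hht.lt_of_ht_lt hchain hx.2.1 huw (by rwa [hu])
  obtain ⟨_, ⟨x₁, hx₁, rfl⟩, -, hx₁δ⟩ := hcof 0 hδ.pos
  rw [← hu] at hδ
  obtain ⟨n, hn⟩ := hccof u hδ x₁ (hlt_u x₁ hx₁ hx₁δ)
  obtain ⟨_, ⟨x, hx, rfl⟩, hpx, hxδ⟩ :=
    hcof (ht (c u n)) (by rw [← hu]; exact hht.strictMono (hc u hδ n))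
  have hxu := hlt_u x hx hxδ
  have hp_lt_x : c u n < x := hht.lt_of_ht_lt hchain (hc u hδ n).le hxu.le hpx
  refine ladderStep_ne hht hγ_lt hx₁.1 hx.1 ?_ (hx₁.2.2.trans hx.2.2.symm)
  exact (hht.strictMono.monotone hn).trans (hγ x hx.1 u hxu hδ n hp_lt_x)

end LadderStep

theorem isSpecialTree_of_ladder_bound {T : Type u} [PartialOrder T] [WellFoundedLT T]
    [Small.{v} T] {ht : T → Ordinal.{v}} (hht : IsHeightFun ht)
    (hchain : ∀ t : T, IsChain (· ≤ ·) {s | s < t}) (hlt : ∀ t, ht t < omega1)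
    {C : Set Ordinal} (hC : IsClubIn C) {c : T → ℕ → T} (hc : ∀ u, IsSuccLimit (ht u) → ∀ n, c u n < u)
    (hccof : ∀ u, IsSuccLimit (ht u) → ∀ s, s < u → ∃ n, s ≤ c u n)
    (γ : T → Ordinal) (hγ_lt : ∀ v ∈ clubLevels ht C, γ v < ht v)
    (hγ : ∀ v ∈ clubLevels ht C, ∀ u, v < u → IsSuccLimit (ht u) → ∀ n, c u n < v →
      ht (c u n) ≤ γ v) :
    IsSpecialTree T :=
  isSpecialTree_of_clubLevels_coloring hht hchain hlt hC
    (fiberWord (clubLevels ht C) (ladderStep ht C γ)) fun _ hx _ hy hxy =>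
      fiberWord_ne_of_lt hchain (ladderStep_spec hht hlt hC hγ_lt)
        (finite_ladderStep_fiber hht hchain hc hccof hγ_lt hγ) hx hy hxy

def ladderPointsBelow {T : Type*} [PartialOrder T] (c : T → ℕ → T) (v : T) : Set T :=
  {p | p < v ∧ ∃ u, v < u ∧ p ∈ range (c u)}

theorem ladderPointsBelow_finite {T : Type*} [PartialOrder T] {c : T → ℕ → T} {v : T}
    (h : ∀ u : ℕ → T, (∀ n, v < u n) → ((⋃ n, range (c (u n))) ∩ {s | s < v}).Finite) :
    (ladderPointsBelow c v).Finite := by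
  by_contra hinf
  let e := (Set.not_finite.mp hinf).natEmbedding
  choose u hvu hu using fun k => (e k).2.2
  exact (h u hvu).not_infinite (infinite_of_injective_forall_mem
    (Subtype.coe_injective.comp e.injective) fun k => ⟨mem_iUnion.mpr ⟨k, hu k⟩, (e k).2.1⟩)

theorem nonspecial_ladders_unbounded_general {T : Type} [PartialOrder T]
    (ht : T → Ordinal) (htree : IsOrderTree T) (hht : IsHeightFun ht)
    (hω : IsOmegaOneTree ht)
    (hnotspecial : ¬ IsSpecialTree T)
    (C : Set Ordinal) (hC : IsClubIn C)
    (G : SimpleGraph T)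
    (c : T → ℕ → T)
    (hc : ∀ v : T, Order.IsSuccLimit (ht v) → ∀ n, c v n < v ∧ G.Adj (c v n) v)
    (hccof : ∀ v : T, Order.IsSuccLimit (ht v) → ∀ s, s < v → ∃ n, s ≤ c v n) :
    ∃ α ∈ C, ∃ v : T, ht v = α ∧ ∃ u : ℕ → T, (∀ n, v < u n) ∧
      ((⋃ n, Set.range (c (u n))) ∩ {s | s < v}).Infinite := by
  obtain ⟨-, hchain, hwf⟩ := htree
  by_contra! hfin
  refine hnotspecial (isSpecialTree_of_ladder_bound hht hchain hω.1 hC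
    (fun v hv n => (hc v hv n).1) hccof (fun v => sSup (ht '' ladderPointsBelow c v))
    (fun v hv => ?_) fun v _ u hvu _ n hlt => ?_)
  · refine Ordinal.sSup_lt_of_finite ((ladderPointsBelow_finite (hfin _ hv.1 v rfl)).image ht)
      hv.2 ?_
    exact forall_mem_image.mpr fun p hp => hht.strictMono hp.1
  · exact le_csSup Ordinal.bddAbove_of_small ⟨c u n, ⟨hlt, u, hvu, n, rfl⟩, rfl⟩

/-- If `T` is a non-special ω₁-tree, `C ⊆ ω₁` a club, and `G` a `T`-graph with
cofinal ladders `c v` at limit-level nodes `v`, then there are `α ∈ C`, a node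
`v` of height `α`, and nodes `u n > v` such that infinitely many points of the
ladders of the `u n` lie strictly below `v`. -/
theorem nonspecial_ladders_unbounded {T : Type} [PartialOrder T]
    (ht : T → Ordinal) (htree : IsOrderTree T) (hht : IsHeightFun ht)
    (hω : IsOmegaOneTree ht)
    (hnotspecial : ¬ IsSpecialTree T)
    (C : Set Ordinal) (hC : IsClubIn C)
    (G : SimpleGraph T)
    (hcomp : ∀ a b : T, G.Adj a b → a < b ∨ b < a)
    (hlowcof : ∀ t s : T, s < t → ∃ u, G.Adj u t ∧ u < t ∧ s ≤ u)
    (c : T → ℕ → T)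
    (hc : ∀ v : T, Order.IsSuccLimit (ht v) → ∀ n, c v n < v ∧ G.Adj (c v n) v)
    (hccof : ∀ v : T, Order.IsSuccLimit (ht v) → ∀ s, s < v → ∃ n, s ≤ c v n) :
    ∃ α ∈ C, ∃ v : T, ht v = α ∧ ∃ u : ℕ → T, (∀ n, v < u n) ∧
      ((⋃ n, Set.range (c (u n))) ∩ {s | s < v}).Infinite :=
  nonspecial_ladders_unbounded_general ht htree hht hω hnotspecial C hC G c hc hccof
end

section
/- Let G be a graph, ε an end of G, and U a countable vertex set. If there is an uncountable collection 𝒞 of pairwise internally disjoint ε–U combs in G, then ε contains a |𝒞|-star of rays whose leaf rays are the spines of a subfamily of combs in 𝒞. -/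
/-- A ray in a graph: an injective one-way infinite path. -/
def IsRay {V : Type*} (G : SimpleGraph V) (r : ℕ → V) : Prop :=
  Function.Injective r ∧ ∀ n, G.Adj (r n) (r (n + 1))

/-- A finite path of length `m` in a graph, given as a function on `ℕ`. -/
def IsFinPath {V : Type*} (G : SimpleGraph V) (m : ℕ) (q : ℕ → V) : Prop :=
  Set.InjOn q (Set.Iic m) ∧ ∀ k < m, G.Adj (q k) (q (k + 1))

/-- The vertex set of a finite path of length `m`. -/
def finPathSet {V : Type*} (m : ℕ) (q : ℕ → V) : Set V := q '' Set.Iic m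

/-- Two rays are equivalent (lie in the same end) if no finite vertex set
separates them: after deleting any finite set, a tail vertex of the first ray
can reach a tail vertex of the second in the remaining graph. -/
def RayEquiv {V : Type*} (G : SimpleGraph V) (r s : ℕ → V) : Prop :=
  ∀ S : Set V, S.Finite → ∃ (i j : ℕ) (hi : r i ∈ Sᶜ) (hj : s j ∈ Sᶜ),
    (G.induce Sᶜ).Reachable ⟨r i, hi⟩ ⟨s j, hj⟩

/-- `R` together with the leaf rays `leaf i` forms a star of rays: the rays are
pairwise disjoint, each leaf ray sends infinitely many disjoint paths to the
central ray `R`, and paths from distinct families meet only in `R`. -/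
def IsStarOfRays {V : Type*} {ι : Type*} (G : SimpleGraph V) (R : ℕ → V)
    (leaf : ι → ℕ → V) : Prop :=
  IsRay G R ∧ (∀ i, IsRay G (leaf i)) ∧
  (∀ i j, i ≠ j → Disjoint (Set.range (leaf i)) (Set.range (leaf j))) ∧
  (∀ i, Disjoint (Set.range (leaf i)) (Set.range R)) ∧
  ∃ (len : ι → ℕ → ℕ) (p : ι → ℕ → ℕ → V),
    (∀ i n, IsFinPath G (len i n) (p i n)) ∧
    (∀ i n, p i n 0 ∈ Set.range (leaf i)) ∧
    (∀ i n, p i n (len i n) ∈ Set.range R) ∧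
    (∀ i m n, m ≠ n →
      Disjoint (finPathSet (len i m) (p i m)) (finPathSet (len i n) (p i n))) ∧
    (∀ i j, i ≠ j → ∀ m n x, x ∈ finPathSet (len i m) (p i m) →
      x ∈ finPathSet (len j n) (p j n) → x ∈ Set.range R)

/-- The graph `G` contains a `κ`-star of rays. -/
def HasStarOfRays {V : Type*} (G : SimpleGraph V) (κ : Cardinal) : Prop :=
  ∃ (ι : Type) (R : ℕ → V) (leaf : ι → ℕ → V),
    Cardinal.mk ι = κ ∧ IsStarOfRays G R leaf

/-- An `ε`–`U` comb: a spine ray disjoint from `U` together with an infinite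
family of pairwise disjoint spine–`U` paths (bristles) whose only vertex in `U`
is the final one (the tooth). -/
structure Comb {V : Type*} (G : SimpleGraph V) (U : Set V) where
  spine : ℕ → V
  spine_ray : IsRay G spine
  spine_disj : ∀ n, spine n ∉ U
  len : ℕ → ℕ
  bristle : ℕ → ℕ → V
  bristle_path : ∀ n, IsFinPath G (len n) (bristle n)
  bristle_start : ∀ n, bristle n 0 ∈ Set.range spine
  bristle_tooth : ∀ n, bristle n (len n) ∈ U
  bristle_internal : ∀ n, ∀ k < len n, bristle n k ∉ U
  bristle_disj : ∀ m n, m ≠ n →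
    Disjoint (finPathSet (len m) (bristle m)) (finPathSet (len n) (bristle n))

/-- The interior of a comb: all its vertices outside `U`. -/
def Comb.interior {V : Type*} {G : SimpleGraph V} {U : Set V}
    (c : Comb G U) : Set V :=
  (Set.range c.spine ∪ ⋃ n, finPathSet (c.len n) (c.bristle n)) \ U

/-!
Call a vertex of `U` a common tooth if it is a tooth of infinitely many combs. As `U`
is countable and a vertex that is not common is a tooth of only finitely many combs,
all but countably many combs have only common teeth.

We thread a ray `R` through the (countably many) common teeth. The current finite
path ends on the spine of a comb `e` and meets it only there. To add the next common
tooth `u`, pick a comb `d` with tooth `u` whose interior the path avoids; as the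
spines of `e` and `d` are equivalent, the path continues along the spine of `e`,
through a connection avoiding the path, along the spine of `d` and a bristle to `u`,
and leaves `u` along a bristle of yet another fresh comb to its spine. So `R` meets
the spines of infinitely many distinct combs; as a finite set meets the interiors of
only finitely many combs, `R` lies in `ε`.

Since interiors are disjoint, only countably many combs meet `R`. The remaining
combs with only common teeth are `|𝒞|` many, and their spines and bristles form a
star of rays around `R`.
-/

open Function

namespace SimpleGraph

variable {V : Type*} {G : SimpleGraph V}

def ReachableIn (G : SimpleGraph V) (A : Set V) (x y : V) : Prop :=
  ∃ p : G.Walk x y, ∀ v ∈ p.support, v ∈ A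

namespace ReachableIn

variable {A B : Set V} {x y z : V}

theorem refl (hx : x ∈ A) : G.ReachableIn A x x :=
  ⟨.nil, by simpa using hx⟩

theorem mem_left (h : G.ReachableIn A x y) : x ∈ A :=
  let ⟨p, hp⟩ := h; hp x p.start_mem_support

theorem mem_right (h : G.ReachableIn A x y) : y ∈ A :=
  let ⟨p, hp⟩ := h; hp y p.end_mem_support

theorem symm (h : G.ReachableIn A x y) : G.ReachableIn A y x :=
  let ⟨p, hp⟩ := h; ⟨p.reverse, by simpa using hp⟩

theorem trans (h₁ : G.ReachableIn A x y) (h₂ : G.ReachableIn A y z) : G.ReachableIn A x z :=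
  let ⟨p, hp⟩ := h₁
  let ⟨q, hq⟩ := h₂
  ⟨p.append q, fun v hv => ((Walk.mem_support_append_iff p q).1 hv).elim (hp v) (hq v)⟩

theorem mono (h : G.ReachableIn A x y) (hAB : A ⊆ B) : G.ReachableIn B x y :=
  let ⟨p, hp⟩ := h; ⟨p, fun v hv => hAB (hp v hv)⟩

end ReachableIn

theorem reachableIn_iff_reachable_induce {A : Set V} {x y : V} (hx : x ∈ A) (hy : y ∈ A) :
    G.ReachableIn A x y ↔ (G.induce A).Reachable ⟨x, hx⟩ ⟨y, hy⟩ := by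
  constructor
  · rintro ⟨p, hp⟩
    exact ⟨p.induce A hp⟩
  · rintro ⟨p⟩
    have hpA : ∀ v ∈ (p.map (Embedding.induce A).toHom).support, v ∈ A := by
      intro v hv
      rw [Walk.support_map, List.mem_map] at hv
      obtain ⟨w, -, rfl⟩ := hv
      exact w.2
    exact ⟨_, hpA⟩

theorem reachableIn_of_forall_lt_adj {A : Set V} {q : ℕ → V} {m : ℕ}
    (hadj : ∀ k < m, G.Adj (q k) (q (k + 1))) (hA : ∀ k ≤ m, q k ∈ A) :
    G.ReachableIn A (q 0) (q m) := by
  induction m with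
  | zero => exact .refl (hA 0 le_rfl)
  | succ m ih =>
    obtain ⟨p, hp⟩ := ih (fun k hk => hadj k (by omega)) (fun k hk => hA k (by omega))
    refine ⟨p.concat (hadj m (by omega)), fun v hv => ?_⟩
    rw [Walk.support_concat, List.mem_append, List.mem_singleton] at hv
    rcases hv with hv | rfl
    · exact hp v hv
    · exact hA _ le_rfl

theorem reachableIn_of_forall_adj {A : Set V} {q : ℕ → V}
    (hadj : ∀ n, G.Adj (q n) (q (n + 1))) (hA : ∀ n, q n ∈ A) (a b : ℕ) :
    G.ReachableIn A (q a) (q b) :=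
  (reachableIn_of_forall_lt_adj (fun k _ => hadj k) (fun k _ => hA k)).symm.trans
    (reachableIn_of_forall_lt_adj (fun k _ => hadj k) (fun k _ => hA k))

theorem Walk.exists_walk_meets_only_at_end {T : Set V} :
    ∀ {x y : V} (p : G.Walk x y), y ∈ T →
      ∃ z ∈ T, ∃ q : G.Walk x z, q.support ⊆ p.support ∧ ∀ v ∈ q.support, v ∈ T → v = z
  | _, _, .nil, hy => ⟨_, hy, .nil, fun _ h => h, by simp⟩
  | x, _, .cons h p, hy => by
    by_cases hx : x ∈ T
    · exact ⟨x, hx, .nil, by simp, by simp⟩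
    obtain ⟨z, hz, q, hqp, hqT⟩ := exists_walk_meets_only_at_end p hy
    refine ⟨z, hz, .cons h q, by simpa using List.cons_subset_cons x hqp,
      fun v hv hvT => ?_⟩
    rcases List.mem_cons.1 (Walk.support_cons h q ▸ hv) with rfl | hv
    · exact absurd hvT hx
    · exact hqT v hv hvT

theorem Walk.IsPath.exists_append_isPath {v₀ x y : V} {p : G.Walk v₀ x} (hp : p.IsPath)
    {A T : Set V} (hpA : ∀ v ∈ p.support, v ∈ A → v = x) (hxy : G.ReachableIn A x y)
    (hy : y ∈ T) :
    ∃ z ∈ T, ∃ q : G.Walk x z, (p.append q).IsPath ∧ (∀ v ∈ q.support, v ∈ A) ∧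
      ∀ v ∈ q.support, v ∈ T → v = z := by
  classical
  obtain ⟨w, hw⟩ := hxy
  obtain ⟨z, hz, q, hqw, hqT⟩ := w.exists_walk_meets_only_at_end hy
  have hsub := q.support_bypass_subset_support
  have hqA : ∀ v ∈ q.bypass.support, v ∈ A := fun v hv => hw v (hqw (hsub hv))
  refine ⟨z, hz, q.bypass, ?_, hqA, fun v hv => hqT v (hsub hv)⟩
  have hq := q.bypass_isPath.support_nodup
  rw [← Walk.cons_tail_support, List.nodup_cons] at hq
  rw [Walk.isPath_def, Walk.support_append, List.nodup_append]
  refine ⟨hp.support_nodup, hq.2, fun a ha b hb hab => hq.1 ?_⟩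
  subst hab
  rwa [hpA a ha (hqA a (List.mem_of_mem_tail hb))] at hb

end SimpleGraph

open SimpleGraph

section Rays

variable {V : Type*} {G : SimpleGraph V}

theorem rayEquiv_iff {r s : ℕ → V} :
    RayEquiv G r s ↔ ∀ S : Set V, S.Finite → ∃ i j, G.ReachableIn Sᶜ (r i) (s j) := by
  refine forall₂_congr fun S _ => ⟨?_, ?_⟩
  · rintro ⟨i, j, hi, hj, h⟩
    exact ⟨i, j, (reachableIn_iff_reachable_induce hi hj).2 h⟩
  · rintro ⟨i, j, h⟩
    exact ⟨i, j, h.mem_left, h.mem_right, (reachableIn_iff_reachable_induce _ _).1 h⟩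

theorem RayEquiv.symm {r s : ℕ → V} (h : RayEquiv G r s) : RayEquiv G s r := by
  rw [rayEquiv_iff] at h ⊢
  intro S hS
  obtain ⟨i, j, hij⟩ := h S hS
  exact ⟨j, i, hij.symm⟩

theorem IsRay.exists_forall_ge_notMem {r : ℕ → V} (hr : IsRay G r) {S : Set V}
    (hS : S.Finite) : ∃ K, ∀ k, K ≤ k → r k ∉ S := by
  obtain ⟨K, hK⟩ := (hS.preimage hr.1.injOn).bddAbove
  exact ⟨K + 1, fun k hk hkS => by have := hK hkS; omega⟩

theorem RayEquiv.trans {r s t : ℕ → V} (hs : IsRay G s) (h₁ : RayEquiv G r s)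
    (h₂ : RayEquiv G s t) : RayEquiv G r t := by
  rw [rayEquiv_iff] at h₁ h₂ ⊢
  intro S hS
  obtain ⟨K, hK⟩ := hs.exists_forall_ge_notMem hS
  set S' := S ∪ s '' Set.Iio K
  have hS' : S'.Finite := hS.union ((Set.finite_Iio K).image s)
  have hS'S : S'ᶜ ⊆ Sᶜ := Set.compl_subset_compl.2 Set.subset_union_left
  have hge : ∀ {n}, s n ∈ S'ᶜ → K ≤ n := fun {n} h => by
    by_contra hn
    exact h (Or.inr ⟨n, by simpa using hn, rfl⟩)
  obtain ⟨i, j, hij⟩ := h₁ S' hS'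
  obtain ⟨j', k, hjk⟩ := h₂ S' hS'
  have htail : G.ReachableIn Sᶜ (s j) (s j') := by
    have := reachableIn_of_forall_adj (A := Sᶜ) (q := fun n => s (K + n)) (fun n => hs.2 (K + n))
      (fun n => hK (K + n) (Nat.le_add_right K n)) (j - K) (j' - K)
    simpa [Nat.add_sub_cancel' (hge hij.mem_right), Nat.add_sub_cancel' (hge hjk.mem_left)]
      using this
  exact ⟨i, k, (hij.mono hS'S).trans (htail.trans (hjk.mono hS'S))⟩

theorem RayEquiv.reachableIn {r s : ℕ → V} (h : RayEquiv G r s)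
    (hr : ∀ n, G.Adj (r n) (r (n + 1))) (hs : ∀ n, G.Adj (s n) (s (n + 1)))
    {S : Set V} (hS : S.Finite) (hrS : ∀ n, r n ∉ S) (hsS : ∀ n, s n ∉ S) (a b : ℕ) :
    G.ReachableIn Sᶜ (r a) (s b) := by
  obtain ⟨i, j, hij⟩ := rayEquiv_iff.1 h S hS
  exact (reachableIn_of_forall_adj hr hrS a i).trans
    (hij.trans (reachableIn_of_forall_adj hs hsS j b))

theorem rayEquiv_of_forall_finite {R r : ℕ → V}
    (h : ∀ S : Set V, S.Finite → ∃ s : ℕ → V, (∀ n, G.Adj (s n) (s (n + 1))) ∧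
      RayEquiv G s r ∧ (∀ n, s n ∉ S) ∧ ∃ a b, R a = s b) :
    RayEquiv G R r := by
  rw [rayEquiv_iff]
  intro S hS
  obtain ⟨s, hs, hsr, hsS, a, b, hab⟩ := h S hS
  obtain ⟨i, j, hij⟩ := rayEquiv_iff.1 hsr S hS
  exact ⟨a, j, hab ▸ (reachableIn_of_forall_adj hs hsS b i).trans hij⟩

theorem List.isPrefix_of_le {α : Type*} {l : ℕ → List α} (h : ∀ n, l n <+: l (n + 1))
    {m n : ℕ} (hmn : m ≤ n) : l m <+: l n := by
  induction hmn with
  | refl => exact List.prefix_rfl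
  | step _ ih => exact ih.trans (h _)

theorem exists_isRay_of_isPrefix {l : ℕ → List V} (hchain : ∀ n, (l n).IsChain G.Adj)
    (hnodup : ∀ n, (l n).Nodup) (hpre : ∀ n, l n <+: l (n + 1))
    (hlen : ∀ n, n < (l n).length) :
    ∃ R : ℕ → V, IsRay G R ∧ ∀ n, ∀ v ∈ l n, v ∈ Set.range R := by
  let R k := (l k)[k]'(hlen k)
  have hR : ∀ n k (hk : k < (l n).length), (l n)[k] = R k := by
    intro n k hk
    rcases le_total n k with h | h
    · exact (List.isPrefix_of_le hpre h).getElem hk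
    · exact ((List.isPrefix_of_le hpre h).getElem (hlen k)).symm
  refine ⟨R, ⟨fun a b hab => ?_, fun k => ?_⟩, fun n v hv => ?_⟩
  · have ha : a < (l (max a b)).length := (le_max_left a b).trans_lt (hlen _)
    have hb : b < (l (max a b)).length := (le_max_right a b).trans_lt (hlen _)
    rw [← hR _ a ha, ← hR _ b hb] at hab
    exact (hnodup _).getElem_inj_iff.1 hab
  · have h₁ : k + 1 < (l (k + 1)).length := hlen _
    rw [← hR (k + 1) k (by omega), ← hR (k + 1) (k + 1) h₁]
    exact List.isChain_iff_getElem.1 (hchain _) k h₁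
  · obtain ⟨k, hk, rfl⟩ := List.getElem_of_mem hv
    exact ⟨k, (hR n k hk).symm⟩

end Rays

theorem Pairwise.subsingleton_setOf_mem {ι α : Type*} {f : ι → Set α}
    (h : Pairwise (Disjoint on f)) (a : α) : {i | a ∈ f i}.Subsingleton :=
  fun _ hi _ hj => by_contra fun hij => Set.disjoint_left.1 (h hij) hi hj

theorem Pairwise.countable_setOf_exists_mem {ι α : Type*} {f : ι → Set α}
    (h : Pairwise (Disjoint on f)) {B : Set α} (hB : B.Countable) :
    {i | ∃ a ∈ B, a ∈ f i}.Countable := by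
  have : {i | ∃ a ∈ B, a ∈ f i} = ⋃ a ∈ B, {i | a ∈ f i} := by ext; simp
  exact this ▸ hB.biUnion fun a _ => (h.subsingleton_setOf_mem a).countable

theorem Pairwise.finite_setOf_exists_mem {ι α : Type*} {f : ι → Set α}
    (h : Pairwise (Disjoint on f)) {B : Set α} (hB : B.Finite) :
    {i | ∃ a ∈ B, a ∈ f i}.Finite := by
  have : {i | ∃ a ∈ B, a ∈ f i} = ⋃ a ∈ B, {i | a ∈ f i} := by ext; simp
  exact this ▸ hB.biUnion fun a _ => (h.subsingleton_setOf_mem a).finite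

theorem Cardinal.mk_eq_of_countable_compl {ι : Type*} (hι : ¬ (Set.univ : Set ι).Countable)
    {J : Set ι} (hJ : Jᶜ.Countable) : Cardinal.mk J = Cardinal.mk ι := by
  have : Uncountable ι := by rwa [← not_countable_iff, ← Set.countable_univ_iff]
  have hlt : Cardinal.mk (Jᶜ : Set ι) < Cardinal.mk ι :=
    (Cardinal.mk_le_aleph0_iff.2 hJ.to_subtype).trans_lt (Cardinal.aleph0_lt_mk_iff.2 this)
  simpa using Cardinal.mk_compl_of_infinite Jᶜ hlt

namespace Comb

variable {V : Type*} {G : SimpleGraph V} {U : Set V}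

def tooth (c : Comb G U) (n : ℕ) : V := c.bristle n (c.len n)

theorem tooth_mem (c : Comb G U) (n : ℕ) : c.tooth n ∈ U := c.bristle_tooth n

theorem spine_mem_interior (c : Comb G U) (a : ℕ) : c.spine a ∈ c.interior :=
  ⟨Or.inl ⟨a, rfl⟩, c.spine_disj a⟩

theorem bristle_mem_interior (c : Comb G U) {n k : ℕ} (hk : k < c.len n) :
    c.bristle n k ∈ c.interior :=
  ⟨Or.inr (Set.mem_iUnion.2 ⟨n, k, Set.mem_Iic.2 hk.le, rfl⟩), c.bristle_internal n k hk⟩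

theorem mem_interior_or_eq_tooth (c : Comb G U) {n : ℕ} {x : V}
    (hx : x ∈ finPathSet (c.len n) (c.bristle n)) : x ∈ c.interior ∨ x = c.tooth n := by
  obtain ⟨k, hk, rfl⟩ := hx
  rcases (Set.mem_Iic.1 hk).lt_or_eq with hk | rfl
  · exact Or.inl (c.bristle_mem_interior hk)
  · exact Or.inr rfl

theorem reachableIn_spine_tooth (c : Comb G U) (a n : ℕ) :
    G.ReachableIn (insert (c.tooth n) c.interior) (c.spine a) (c.tooth n) := by
  obtain ⟨b, hb⟩ := c.bristle_start n
  have hspine : G.ReachableIn c.interior (c.spine a) (c.spine b) :=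
    reachableIn_of_forall_adj c.spine_ray.2 c.spine_mem_interior a b
  have hbristle : G.ReachableIn (insert (c.tooth n) c.interior) (c.bristle n 0) (c.tooth n) :=
    reachableIn_of_forall_lt_adj (c.bristle_path n).2 fun k hk => by
      rcases hk.lt_or_eq with hk | rfl
      · exact Or.inr (c.bristle_mem_interior hk)
      · exact Or.inl rfl
  exact (hspine.mono (Set.subset_insert _ _)).trans (hb ▸ hbristle)

/-- Bristles of distinct combs meet only in teeth, which lie on `R`. -/
theorem isStarOfRays_spine {ι : Type*} {c : ι → Comb G U} {R : ℕ → V} (hR : IsRay G R)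
    (hdisj : Pairwise (Disjoint on fun i => (c i).interior))
    (hRint : ∀ i, Disjoint (c i).interior (Set.range R))
    (hteeth : ∀ i n, (c i).tooth n ∈ Set.range R) :
    IsStarOfRays G R fun i => (c i).spine := by
  have hsub : ∀ i, Set.range (c i).spine ⊆ (c i).interior :=
    fun i => Set.range_subset_iff.2 (c i).spine_mem_interior
  refine ⟨hR, fun i => (c i).spine_ray, fun i j hij => (hdisj hij).mono (hsub i) (hsub j),
    fun i => (hRint i).mono_left (hsub i), fun i => (c i).len, fun i => (c i).bristle,
    fun i => (c i).bristle_path, fun i => (c i).bristle_start, hteeth,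
    fun i => (c i).bristle_disj, fun i j hij m n x hxi hxj => ?_⟩
  rcases (c i).mem_interior_or_eq_tooth hxi with hi | rfl
  · rcases (c j).mem_interior_or_eq_tooth hxj with hj | rfl
    · exact absurd (hdisj hij) (Set.not_disjoint_iff.2 ⟨x, hi, hj⟩)
    · exact hteeth j n
  · exact hteeth i m

variable {ι : Type*}

def commonTeeth (c : ι → Comb G U) : Set V := {u | {i | ∃ n, (c i).tooth n = u}.Infinite}

variable {c : ι → Comb G U}

theorem commonTeeth_subset : commonTeeth c ⊆ U := fun _ hu =>
  let ⟨_, n, hn⟩ := hu.nonempty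
  hn ▸ tooth_mem _ n

theorem countable_setOf_tooth_notMem_commonTeeth (hU : U.Countable) :
    {i | ∃ n, (c i).tooth n ∉ commonTeeth c}.Countable := by
  have hsub : {i | ∃ n, (c i).tooth n ∉ commonTeeth c} ⊆
      ⋃ u ∈ U \ commonTeeth c, {i | ∃ n, (c i).tooth n = u} :=
    fun i ⟨n, hn⟩ => Set.mem_biUnion ⟨tooth_mem _ n, hn⟩ ⟨n, rfl⟩
  exact ((hU.mono Set.sdiff_subset).biUnion fun u hu =>
    (Set.not_infinite.1 hu.2).countable).mono hsub

theorem exists_tooth_eq_of_mem_commonTeeth (hdisj : Pairwise (Disjoint on fun i => (c i).interior))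
    {u : V} (hu : u ∈ commonTeeth c) {B : Set V} (hB : B.Finite) :
    ∃ d, (∃ n, (c d).tooth n = u) ∧ ∀ v ∈ B, v ∉ (c d).interior := by
  obtain ⟨d, hdu, hdB⟩ := hu.exists_notMem_finite (hdisj.finite_setOf_exists_mem hB)
  exact ⟨d, hdu, fun v hv hvd => hdB ⟨v, hv, hvd⟩⟩

structure PathToSpine (c : ι → Comb G U) (v₀ : V) where
  comb : ι
  pos : ℕ
  walk : G.Walk v₀ ((c comb).spine pos)
  isPath : walk.IsPath
  eq_pos_of_spine_mem : ∀ k, (c comb).spine k ∈ walk.support → k = pos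

variable {v₀ : V}

theorem PathToSpine.exists_of_reachableIn {x : V} {p : G.Walk v₀ x} (hp : p.IsPath) {d : ι}
    (hd : ∀ v ∈ p.support, v ∉ (c d).interior) {A : Set V}
    (hpA : ∀ v ∈ p.support, v ∈ A → v = x) {a : ℕ}
    (hreach : G.ReachableIn A x ((c d).spine a)) :
    ∃ P : PathToSpine c v₀, P.comb = d ∧ p.support <+: P.walk.support ∧
      p.length < P.walk.length := by
  obtain ⟨_, ⟨m, rfl⟩, q, hpq, -, hqT⟩ :=
    hp.exists_append_isPath (T := Set.range (c d).spine) hpA hreach ⟨a, rfl⟩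
  have hq : q.length ≠ 0 := fun h =>
    hd x p.end_mem_support (Walk.eq_of_length_eq_zero h ▸ (c d).spine_mem_interior m)
  refine ⟨⟨d, m, p.append q, hpq, fun k hk => ?_⟩, rfl, ?_, ?_⟩
  · rcases (Walk.mem_support_append_iff _ _).1 hk with h | h
    · exact absurd ((c d).spine_mem_interior k) (hd _ h)
    · exact (c d).spine_ray.1 (hqT _ h ⟨k, rfl⟩)
  · rw [Walk.support_append]
    exact List.prefix_append _ _
  · rw [Walk.length_append]
    omega

/-- If `u` is not yet on the path, we reach it through a fresh comb having `u` as a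
tooth and leave it through another one. -/
theorem PathToSpine.exists_extend (hdisj : Pairwise (Disjoint on fun i => (c i).interior))
    (hspine : ∀ i j, RayEquiv G (c i).spine (c j).spine) (P : PathToSpine c v₀) {u : V}
    (hu : u ∈ commonTeeth c) :
    ∃ P' : PathToSpine c v₀, P.walk.support <+: P'.walk.support ∧
      P.walk.length < P'.walk.length ∧ u ∈ P'.walk.support ∧
      ∀ v ∈ P.walk.support, v ∉ (c P'.comb).interior := by
  set x := (c P.comb).spine P.pos
  set S : Set V := {v | v ∈ P.walk.support ∧ v ≠ x}
  have hSfin : S.Finite := P.walk.support.finite_toSet.subset fun _ hv => hv.1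
  have hSx : ∀ v ∈ P.walk.support, v ∈ Sᶜ → v = x := fun v hv hvS =>
    by_contra fun hvx => hvS ⟨hv, hvx⟩
  obtain ⟨d, ⟨n, rfl⟩, hd⟩ := exists_tooth_eq_of_mem_commonTeeth hdisj hu
    P.walk.support.finite_toSet
  have hxd : G.ReachableIn Sᶜ x ((c d).spine 0) :=
    (hspine _ _).reachableIn (c _).spine_ray.2 (c d).spine_ray.2 hSfin
      (fun k hk => hk.2 (by rw [P.eq_pos_of_spine_mem k hk.1]))
      (fun k hk => hd _ hk.1 ((c d).spine_mem_interior k)) P.pos 0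
  by_cases hdP : (c d).tooth n ∈ P.walk.support
  · obtain ⟨P', rfl, hpre, hlt⟩ := PathToSpine.exists_of_reachableIn P.isPath hd hSx hxd
    exact ⟨P', hpre, hlt, hpre.subset hdP, hd⟩
  have hdS : insert ((c d).tooth n) (c d).interior ⊆ Sᶜ :=
    Set.insert_subset_iff.2 ⟨fun h => hdP h.1, fun v hv hvS => hd v hvS.1 hv⟩
  obtain ⟨_, rfl, q, hpq, -, -⟩ := P.isPath.exists_append_isPath hSx
    (hxd.trans (((c d).reachableIn_spine_tooth 0 n).mono hdS)) (Set.mem_singleton _)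
  obtain ⟨d', ⟨n', hn'⟩, hd'⟩ := exists_tooth_eq_of_mem_commonTeeth hdisj hu
    (P.walk.append q).support.finite_toSet
  have hreach : G.ReachableIn (insert ((c d).tooth n) (c d').interior) ((c d).tooth n)
      ((c d').spine 0) := hn' ▸ ((c d').reachableIn_spine_tooth 0 n').symm
  obtain ⟨P', rfl, hpre, hlt⟩ := PathToSpine.exists_of_reachableIn hpq hd'
    (fun v hv h => h.resolve_right (hd' v hv)) hreach
  have hpre₁ : P.walk.support <+: (P.walk.append q).support := by
    rw [Walk.support_append]
    exact List.prefix_append _ _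
  refine ⟨P', hpre₁.trans hpre, ?_, hpre.subset (Walk.end_mem_support _),
    fun v hv => hd' v (hpre₁.subset hv)⟩
  rw [Walk.length_append] at hlt
  omega

theorem exists_isRay_rayEquiv_commonTeeth_subset {r0 : ℕ → V} (hr0 : IsRay G r0)
    (hU : U.Countable) (hunc : ¬ (Set.univ : Set ι).Countable)
    (hspine : ∀ i, RayEquiv G (c i).spine r0)
    (hdisj : Pairwise (Disjoint on fun i => (c i).interior)) :
    ∃ R : ℕ → V, IsRay G R ∧ RayEquiv G R r0 ∧ commonTeeth c ⊆ Set.range R := by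
  obtain ⟨i₀, hi₀⟩ : ∃ i, i ∉ {i | ∃ n, (c i).tooth n ∉ commonTeeth c} := by
    by_contra! h
    exact hunc ((countable_setOf_tooth_notMem_commonTeeth hU).mono fun i _ => h i)
  obtain ⟨enum, henum⟩ := (hU.mono commonTeeth_subset).exists_eq_range
    ⟨_, not_not.1 (not_exists.1 hi₀ 0)⟩
  have hmem : ∀ n, enum n ∈ commonTeeth c := fun n => henum ▸ ⟨n, rfl⟩
  let P₀ : PathToSpine c ((c i₀).spine 0) :=
    ⟨i₀, 0, .nil, .nil, fun k hk => (c i₀).spine_ray.1 (by simpa using hk)⟩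
  choose next hpre hlen hnext hfresh using fun (P : PathToSpine c _) n =>
    P.exists_extend hdisj (fun i j => (hspine i).trans hr0 (hspine j).symm) (hmem n)
  let seq : ℕ → PathToSpine c _ := fun n => Nat.rec P₀ (fun n P => next P n) n
  have hlen_mono : StrictMono fun n => (seq n).walk.length :=
    strictMono_nat_of_lt_succ fun n => hlen (seq n) n
  obtain ⟨R, hR, hmemR⟩ := exists_isRay_of_isPrefix (l := fun n => (seq n).walk.support)
    (fun n => (seq n).walk.isChain_adj_support) (fun n => (seq n).isPath.support_nodup)
    (fun n => hpre _ n) fun n => by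
      rw [Walk.length_support]
      exact Nat.lt_succ_of_le (hlen_mono.id_le n)
  have hcomb_inj : Function.Injective fun n => (seq n).comb := by
    refine Function.Injective.of_lt_imp_ne fun m n hmn heq => ?_
    obtain ⟨k, rfl⟩ := Nat.exists_eq_add_of_lt hmn
    refine hfresh (seq (m + k)) (m + k) _
      ((List.isPrefix_of_le (fun n => hpre (seq n) n) (Nat.le_add_right m k)).subset
        (seq m).walk.end_mem_support) ?_
    exact heq ▸ (c _).spine_mem_interior _
  refine ⟨R, hR, rayEquiv_of_forall_finite fun S hS => ?_, ?_⟩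
  · obtain ⟨_, ⟨N, rfl⟩, hN⟩ :=
      (Set.infinite_range_of_injective hcomb_inj).exists_notMem_finite
        (hdisj.finite_setOf_exists_mem hS)
    obtain ⟨a, ha⟩ := hmemR N _ (seq N).walk.end_mem_support
    exact ⟨_, (c _).spine_ray.2, hspine _,
      fun k hk => hN ⟨_, hk, (c _).spine_mem_interior k⟩, a, _, ha⟩
  · rw [henum]
    rintro _ ⟨n, rfl⟩
    exact hmemR (n + 1) _ (hnext (seq n) n)

end Comb

open Comb

/-- Comb-to-star lemma: if `U` is countable and `𝒞` is an uncountable family of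
pairwise internally disjoint `ε`–`U` combs (spines in the end of `r0`), then
the end of `r0` contains a `|𝒞|`-star of rays whose leaf rays are the spines of
a subfamily of the combs. -/
theorem combs_to_star {V : Type*} (G : SimpleGraph V) (r0 : ℕ → V)
    (hr0 : IsRay G r0) (U : Set V) (hU : U.Countable)
    {ι : Type} (c : ι → Comb G U) (hunc : ¬ (Set.univ : Set ι).Countable)
    (hspine : ∀ i, RayEquiv G (c i).spine r0)
    (hdisj : ∀ i j, i ≠ j → Disjoint (c i).interior (c j).interior) :
    ∃ (R : ℕ → V) (J : Set ι), Cardinal.mk J = Cardinal.mk ι ∧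
      RayEquiv G R r0 ∧
      IsStarOfRays G R (fun j : J => (c j.1).spine) := by
  obtain ⟨R, hR, hRr0, hteeth⟩ :=
    exists_isRay_rayEquiv_commonTeeth_subset hr0 hU hunc hspine hdisj
  let J : Set ι := {i | (∀ n, (c i).tooth n ∈ commonTeeth c) ∧
    Disjoint (c i).interior (Set.range R)}
  have hJ : Jᶜ.Countable := by
    refine ((countable_setOf_tooth_notMem_commonTeeth (c := c) hU).union
      (Pairwise.countable_setOf_exists_mem hdisj (Set.countable_range R))).mono fun i hi => ?_
    rcases not_and_or.1 hi with h | h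
    · exact Or.inl (not_forall.1 h)
    · obtain ⟨v, hvi, hvR⟩ := Set.not_disjoint_iff.1 h
      exact Or.inr ⟨v, hvR, hvi⟩
  exact ⟨R, J, Cardinal.mk_eq_of_countable_compl hunc hJ, hRr0,
    isStarOfRays_spine hR (Pairwise.comp_of_injective hdisj Subtype.val_injective)
      (fun j => j.2.2) fun j n => hteeth (j.2.1 n)⟩
end

section
/- In the graph ω₁ # ℕ (the ray inflation of a sparse ω₁-tree-graph, where the tree is the ordinal ω₁ with its linear order), for any sequence of vertices Γ = ⟨(α_n, n) : n ∈ ω⟩ with α_n < α_{n+1} limit ordinals, there exists a comb in ω₁ # ℕ whose teeth are precisely the vertices in Γ: for each n there is a path P_n from (α_n, n) to (α_{n+1}, n+1) contained in the subgraph induced by {(σ, i) : α_n ≤ σ ≤ α_{n+1}, i ∈ ω}, and the union ⋃_n P_n contains a comb with teeth {(α_n, n) : n ∈ ω}. -/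
/-- Vertices of the graph `ω₁ # ℕ`. -/
def Vtx : Type 1 := {o : Ordinal // o < omega1} × ℕ

/-- Adjacency generating `ω₁ # ℕ`, the ray inflation of the sparse tree-graph
on the ordinal `ω₁`: vertical edges `{(α,n),(α,n+1)}`, predecessor edges
`{(γ,n),(γ+1,n)}`, and ladder edges `{(b α n, n),(α,n)}` for limit `α` with
ladder `b α`. -/
def omegaRel (b : Ordinal → ℕ → Ordinal) : Vtx → Vtx → Prop := fun p q =>
  (p.1 = q.1 ∧ q.2 = p.2 + 1) ∨
  (p.2 = q.2 ∧ (q.1 : Ordinal) = (p.1 : Ordinal) + 1) ∨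
  (p.2 = q.2 ∧ Order.IsSuccLimit (q.1 : Ordinal) ∧ (p.1 : Ordinal) = b q.1 p.2)

/-- The graph `ω₁ # ℕ`. -/
def omegaGraph (b : Ordinal → ℕ → Ordinal) : SimpleGraph Vtx :=
  SimpleGraph.fromRel (omegaRel b)

/-!
Choose levels `M n > n` such that the `M (n + 1)`-th ladder rung of `α (n + 1)` lies above `α n`.
The bristle at `α n` runs down its column from `(α n, M n)` to the tooth `(α n, n)`. The spine
segment from `(α n, M n)` climbs through the ordinals strictly between `α n` and that rung (a
successor is entered from its predecessor, a limit through a rung of its ladder, on any level) and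
then takes the ladder edge into `(α (n + 1), M (n + 1))`. As bristles and segments occupy disjoint
ranges of columns, the segments concatenate to a ray avoiding the teeth, and `P n` is the path
bristle–segment–bristle.
-/

namespace SimpleGraph.Walk

variable {V : Type*} {G : SimpleGraph V}

theorem IsPath.append_of_support_inter {u v w : V} {p : G.Walk u v} {q : G.Walk v w}
    (hp : p.IsPath) (hq : q.IsPath) (h : ∀ x ∈ p.support, x ∈ q.support → x = v) :
    (p.append q).IsPath := by
  have hq' := hq.support_nodup
  rw [← cons_tail_support q, List.nodup_cons] at hq'
  rw [isPath_def, support_append, List.nodup_append]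
  refine ⟨hp.support_nodup, hq'.2, fun x hx y hy hxy => ?_⟩
  subst hxy
  exact hq'.1 (h x hx (List.mem_of_mem_tail hy) ▸ hy)

theorem IsPath.isFinPath {u v : V} {p : G.Walk u v} (hp : p.IsPath) :
    IsFinPath G p.length p.getVert :=
  ⟨hp.getVert_injOn, fun _ hk => p.adj_getVert_succ hk⟩

theorem finPathSet_getVert {u v : V} (p : G.Walk u v) :
    finPathSet p.length p.getVert = {x | x ∈ p.support} := by
  ext x
  simp only [finPathSet, Set.mem_image, Set.mem_Iic, Set.mem_ofPred_eq,
    mem_support_iff_exists_getVert]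
  exact exists_congr fun _ => and_comm

end SimpleGraph.Walk

section Ray

open SimpleGraph.Walk

variable {V : Type*} {G : SimpleGraph V} {a : ℕ → V}

def concatWalks (S : ∀ n, G.Walk (a n) (a (n + 1))) : ∀ N, G.Walk (a 0) (a N)
  | 0 => .nil
  | N + 1 => (concatWalks S N).append (S N)

variable {S : ∀ n, G.Walk (a n) (a (n + 1))}

theorem length_concatWalks_succ (N : ℕ) :
    (concatWalks S (N + 1)).length = (concatWalks S N).length + (S N).length :=
  length_append _ _

theorem le_length_concatWalks (hne : ∀ n, a n ≠ a (n + 1)) (N : ℕ) :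
    N ≤ (concatWalks S N).length := by
  induction N with
  | zero => exact Nat.zero_le _
  | succ N ih =>
    have : 0 < (S N).length := not_nil_iff_lt_length.mp (not_nil_of_ne (hne N))
    rw [length_concatWalks_succ]
    omega

theorem monotone_length_concatWalks : Monotone fun N => (concatWalks S N).length :=
  monotone_nat_of_le_succ fun N => by simp only [length_concatWalks_succ]; omega

theorem getVert_concatWalks_of_le {N N' k : ℕ} (hN : N ≤ N')
    (hk : k ≤ (concatWalks S N).length) :
    (concatWalks S N').getVert k = (concatWalks S N).getVert k := by
  induction N', hN using Nat.le_induction with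
  | base => rfl
  | succ N' hN ih =>
    rw [concatWalks, getVert_append', if_pos (hk.trans (monotone_length_concatWalks hN)), ih]

theorem mem_support_concatWalks {N : ℕ} {v : V} (hv : v ∈ (concatWalks S N).support) :
    v = a 0 ∨ ∃ m < N, v ∈ (S m).support := by
  induction N with
  | zero => exact Or.inl (by simpa [concatWalks] using hv)
  | succ N ih =>
    rcases (mem_support_append_iff _ _).mp hv with hv | hv
    · exact (ih hv).imp_right fun ⟨m, hm, hvm⟩ => ⟨m, by omega, hvm⟩
    · exact Or.inr ⟨N, by omega, hv⟩

theorem isPath_concatWalks (hS : ∀ n, (S n).IsPath)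
    (hmeet : ∀ m n, m < n → ∀ v ∈ (S m).support, v ∈ (S n).support →
      n = m + 1 ∧ v = a n)
    (N : ℕ) : (concatWalks S N).IsPath := by
  induction N with
  | zero => exact IsPath.nil
  | succ N ih =>
    refine ih.append_of_support_inter (hS N) fun v hv hvN => ?_
    rcases mem_support_concatWalks hv with rfl | ⟨m, hm, hvm⟩
    · rcases Nat.eq_zero_or_pos N with rfl | hN
      · rfl
      · exact (hmeet 0 N hN _ (S 0).start_mem_support hvN).2
    · exact (hmeet m N hm v hvm hvN).2

theorem exists_isRay_of_walks (hne : ∀ n, a n ≠ a (n + 1)) (hS : ∀ n, (S n).IsPath)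
    (hmeet : ∀ m n, m < n → ∀ v ∈ (S m).support, v ∈ (S n).support →
      n = m + 1 ∧ v = a n) :
    ∃ r : ℕ → V, IsRay G r ∧ Set.range r ⊆ ⋃ n, {v | v ∈ (S n).support} ∧
      ∀ n, a n ∈ Set.range r := by
  have hlen := le_length_concatWalks (S := S) hne
  have hr : ∀ {k N}, k < N →
      (concatWalks S (k + 1)).getVert k = (concatWalks S N).getVert k :=
    fun {k N} hkN =>
      (getVert_concatWalks_of_le hkN ((hlen (k + 1)).trans' (Nat.le_succ _))).symm
  refine ⟨fun k => (concatWalks S (k + 1)).getVert k, ⟨fun k k' hkk' => ?_, fun k => ?_⟩, ?_,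
    fun n => ⟨(concatWalks S n).length, ?_⟩⟩
  · dsimp only at hkk'
    have := hlen (max k k' + 1)
    rw [hr (show k < max k k' + 1 by omega), hr (show k' < max k k' + 1 by omega)] at hkk'
    exact (isPath_concatWalks hS hmeet _).getVert_injOn (by simp; omega) (by simp; omega) hkk'
  · dsimp only
    rw [hr (show k < k + 2 by omega), hr (show k + 1 < k + 2 by omega)]
    exact (concatWalks S (k + 2)).adj_getVert_succ (by have := hlen (k + 2); omega)
  · rintro _ ⟨k, rfl⟩
    dsimp only
    rcases mem_support_concatWalks ((concatWalks S (k + 1)).getVert_mem_support k) with h | h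
    · exact Set.mem_iUnion.mpr ⟨0, by rw [Set.mem_ofPred_eq, h]; exact (S 0).start_mem_support⟩
    · obtain ⟨m, -, hm⟩ := h
      exact Set.mem_iUnion.mpr ⟨m, hm⟩
  · dsimp only
    rw [getVert_concatWalks_of_le ((hlen n).trans (Nat.le_succ _)) le_rfl, getVert_length]

end Ray

theorem StrictMono.apply_notMem_Ioo {β : Type*} [Preorder β] {α : ℕ → β}
    (hα : StrictMono α) (m n : ℕ) : α m ∉ Set.Ioo (α n) (α (n + 1)) := fun h =>
  (Nat.lt_succ_iff.mp (hα.lt_iff_lt.mp h.2)).not_gt (hα.lt_iff_lt.mp h.1)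

section Comb

open SimpleGraph.Walk

variable {V β : Type*} [LinearOrder β] {G : SimpleGraph V} {a t : ℕ → V}

/-- `c v` is the column of the vertex `v`; the bristle `B n` leads from the spine vertex `a n` to
the tooth `t n`. -/
structure IsColumnComb (c : V → β) (α : ℕ → β) (B : ∀ n, G.Walk (a n) (t n))
    (S : ∀ n, G.Walk (a n) (a (n + 1))) : Prop where
  strictMono : StrictMono α
  isPath_bristle : ∀ n, (B n).IsPath
  col_bristle : ∀ n, ∀ v ∈ (B n).support, c v = α n
  isPath_segment : ∀ n, (S n).IsPath
  mem_segment : ∀ n, ∀ v ∈ (S n).support,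
    v = a n ∨ v = a (n + 1) ∨ c v ∈ Set.Ioo (α n) (α (n + 1))
  ne_tooth : ∀ n, a n ≠ t n

def combPath (B : ∀ n, G.Walk (a n) (t n)) (S : ∀ n, G.Walk (a n) (a (n + 1))) (n : ℕ) :
    G.Walk (t n) (t (n + 1)) :=
  (B n).reverse.append ((S n).append (B (n + 1)))

theorem mem_combPath_of_bristle {B : ∀ n, G.Walk (a n) (t n)}
    {S : ∀ n, G.Walk (a n) (a (n + 1))} {n : ℕ} {v : V} (hv : v ∈ (B n).support) :
    v ∈ (combPath B S n).support := by
  simp [combPath, hv]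

theorem mem_combPath_of_segment {B : ∀ n, G.Walk (a n) (t n)}
    {S : ∀ n, G.Walk (a n) (a (n + 1))} {n : ℕ} {v : V} (hv : v ∈ (S n).support) :
    v ∈ (combPath B S n).support := by
  simp [combPath, hv]

namespace IsColumnComb

variable {c : V → β} {α : ℕ → β} {B : ∀ n, G.Walk (a n) (t n)}
  {S : ∀ n, G.Walk (a n) (a (n + 1))}

theorem col_start (h : IsColumnComb c α B S) (n : ℕ) : c (a n) = α n :=
  h.col_bristle n _ (B n).start_mem_support

theorem col_tooth (h : IsColumnComb c α B S) (n : ℕ) : c (t n) = α n :=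
  h.col_bristle n _ (B n).end_mem_support

theorem col_of_mem_segment (h : IsColumnComb c α B S) {n : ℕ} {v : V}
    (hv : v ∈ (S n).support) : c v ∈ Set.Icc (α n) (α (n + 1)) ∧
      (c v = α n → v = a n) ∧ (c v = α (n + 1) → v = a (n + 1)) := by
  have hlt := h.strictMono (Nat.lt_succ_self n)
  rcases h.mem_segment n v hv with rfl | rfl | ⟨h₁, h₂⟩
  · exact ⟨⟨(h.col_start n).ge, (h.col_start n).trans_le hlt.le⟩, fun _ => rfl,
      fun hv => absurd ((h.col_start n).symm.trans hv) hlt.ne⟩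
  · exact ⟨⟨hlt.le.trans (h.col_start _).ge, (h.col_start _).le⟩,
      fun hv => absurd (hv.symm.trans (h.col_start _)) hlt.ne, fun _ => rfl⟩
  · exact ⟨⟨h₁.le, h₂.le⟩, fun hv => absurd hv h₁.ne', fun hv => absurd hv h₂.ne⟩

theorem isPath_combPath (h : IsColumnComb c α B S) (n : ℕ) :
    (combPath B S n).IsPath := by
  have hne : α n ≠ α (n + 1) := (h.strictMono (Nat.lt_succ_self n)).ne
  refine (h.isPath_bristle n).reverse.append_of_support_inter
    ((h.isPath_segment n).append_of_support_inter (h.isPath_bristle _) fun v hv hv' =>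
      (h.col_of_mem_segment hv).2.2 (h.col_bristle _ v hv')) fun v hv hv' => ?_
  have hcol : c v = α n := h.col_bristle n v (by simpa using hv)
  rcases (mem_support_append_iff _ _).mp hv' with hv' | hv'
  · exact (h.col_of_mem_segment hv').2.1 hcol
  · exact absurd (hcol.symm.trans (h.col_bristle _ v hv')) hne

theorem col_of_mem_combPath (h : IsColumnComb c α B S) {n : ℕ} {v : V}
    (hv : v ∈ (combPath B S n).support) : c v ∈ Set.Icc (α n) (α (n + 1)) := by
  have hlt := h.strictMono (Nat.lt_succ_self n)
  simp only [combPath, mem_support_append_iff,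
    support_reverse, List.mem_reverse] at hv
  rcases hv with hv | hv | hv
  · exact (h.col_bristle n v hv).symm ▸ ⟨le_rfl, hlt.le⟩
  · exact (h.col_of_mem_segment hv).1
  · exact (h.col_bristle _ v hv).symm ▸ ⟨hlt.le, le_rfl⟩

theorem segment_meet (h : IsColumnComb c α B S) {m n : ℕ} (hmn : m < n) {v : V}
    (hm : v ∈ (S m).support) (hn : v ∈ (S n).support) : n = m + 1 ∧ v = a n := by
  obtain ⟨⟨-, hm₂⟩, -, -⟩ := h.col_of_mem_segment hm
  obtain ⟨⟨hn₁, -⟩, hn, -⟩ := h.col_of_mem_segment hn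
  have hle : α (m + 1) ≤ α n := h.strictMono.monotone hmn
  have hcol : c v = α n := le_antisymm (hm₂.trans hle) hn₁
  exact ⟨h.strictMono.injective (le_antisymm (hcol ▸ hm₂) hle), hn hcol⟩

theorem start_ne_tooth (h : IsColumnComb c α B S) (m n : ℕ) : a m ≠ t n := fun he => by
  obtain rfl : m = n :=
    h.strictMono.injective ((h.col_start m).symm.trans (he ▸ h.col_tooth n))
  exact h.ne_tooth m he

theorem segment_ne_tooth (h : IsColumnComb c α B S) {n : ℕ} {v : V}
    (hv : v ∈ (S n).support) (m : ℕ) : v ≠ t m := by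
  rcases h.mem_segment n v hv with rfl | rfl | hcol
  · exact h.start_ne_tooth n m
  · exact h.start_ne_tooth _ m
  · rintro rfl
    exact h.strictMono.apply_notMem_Ioo m n (h.col_tooth m ▸ hcol)

theorem bristle_ne_tooth (h : IsColumnComb c α B S) {m k : ℕ} (hk : k < (B m).length)
    (n : ℕ) : (B m).getVert k ≠ t n := fun he => by
  obtain rfl : m = n := h.strictMono.injective <|
    (h.col_bristle m _ ((B m).getVert_mem_support k)).symm.trans (he ▸ h.col_tooth n)
  exact hk.ne ((h.isPath_bristle m).getVert_injOn (by simp [hk.le]) (by simp)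
    (he.trans (B m).getVert_length.symm))

theorem disjoint_bristle (h : IsColumnComb c α B S) {m m' : ℕ} (hmm' : m ≠ m') :
    Disjoint {v | v ∈ (B m).support} {v | v ∈ (B m').support} :=
  Set.disjoint_left.mpr fun v hv hv' =>
    hmm' (h.strictMono.injective ((h.col_bristle m v hv).symm.trans (h.col_bristle m' v hv')))

theorem exists_comb (h : IsColumnComb c α B S) :
    ∃ (len : ℕ → ℕ) (P : ℕ → ℕ → V),
      (∀ n, IsFinPath G (len n) (P n)) ∧
      (∀ n, P n 0 = t n) ∧
      (∀ n, P n (len n) = t (n + 1)) ∧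
      (∀ n, ∀ k ≤ len n, α n ≤ c (P n k) ∧ c (P n k) ≤ α (n + 1)) ∧
      ∃ (spine : ℕ → V) (blen : ℕ → ℕ) (br : ℕ → ℕ → V),
        IsRay G spine ∧
        Set.range spine ⊆ ⋃ n, finPathSet (len n) (P n) ∧
        (∀ m, IsFinPath G (blen m) (br m)) ∧
        (∀ m, finPathSet (blen m) (br m) ⊆ ⋃ n, finPathSet (len n) (P n)) ∧
        (∀ m, br m 0 ∈ Set.range spine) ∧
        (∀ m, ∃ n, br m (blen m) = t n) ∧
        (∀ n, ∃ m, br m (blen m) = t n) ∧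
        (∀ m, ∀ k < blen m, ∀ n, br m k ≠ t n) ∧
        (∀ n, spine n ∉ {v : V | ∃ m, v = t m}) ∧
        (∀ m m', m ≠ m' →
          Disjoint (finPathSet (blen m) (br m)) (finPathSet (blen m') (br m'))) := by
  have hne : ∀ n, a n ≠ a (n + 1) := fun n he =>
    (h.strictMono (Nat.lt_succ_self n)).ne (by rw [← h.col_start, ← h.col_start, he])
  obtain ⟨spine, hray, hspine, hstart⟩ :=
    exists_isRay_of_walks hne h.isPath_segment fun _ _ hmn _ hm hn => h.segment_meet hmn hm hn
  have hunion : ∀ {W : Set V} {n : ℕ}, W ⊆ {v | v ∈ (combPath B S n).support} →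
      W ⊆ ⋃ n, finPathSet (combPath B S n).length (combPath B S n).getVert := fun hW =>
    hW.trans fun v hv => Set.mem_iUnion.mpr ⟨_, by rwa [finPathSet_getVert]⟩
  refine ⟨fun n => (combPath B S n).length, fun n => (combPath B S n).getVert,
    fun n => (h.isPath_combPath n).isFinPath, fun n => (combPath B S n).getVert_zero,
    fun n => (combPath B S n).getVert_length,
    fun n k _ => h.col_of_mem_combPath ((combPath B S n).getVert_mem_support k),
    spine, fun m => (B m).length, fun m => (B m).getVert, hray, ?_,
    fun m => (h.isPath_bristle m).isFinPath,
    fun m => hunion (by rw [finPathSet_getVert]; exact fun _ => mem_combPath_of_bristle),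
    fun m => by simpa only [getVert_zero] using hstart m,
    fun m => ⟨m, (B m).getVert_length⟩,
    fun n => ⟨n, (B n).getVert_length⟩, fun m _ hk n => h.bristle_ne_tooth hk n, ?_,
    fun m m' hmm' => by simpa only [finPathSet_getVert] using
      h.disjoint_bristle hmm'⟩
  · intro v hv
    obtain ⟨n, hn⟩ := Set.mem_iUnion.mp (hspine hv)
    exact hunion (fun _ => mem_combPath_of_segment) hn
  · rintro n ⟨m, hm⟩
    obtain ⟨i, hi⟩ := Set.mem_iUnion.mp (hspine ⟨n, rfl⟩)
    exact h.segment_ne_tooth hi m hm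

end IsColumnComb

end Comb

-- Lets `rw` and `simp` accept pairs `(x, i)` as vertices of `omegaGraph b`.
attribute [reducible] Vtx

section OmegaGraph

open SimpleGraph.Walk

variable {b : Ordinal → ℕ → Ordinal}

theorem omegaGraph_adj_vertical (x : {o : Ordinal // o < omega1}) (i : ℕ) :
    (omegaGraph b).Adj (x, i) (x, i + 1) := by
  rw [omegaGraph, SimpleGraph.fromRel_adj]
  exact ⟨fun h => by simpa using congrArg Prod.snd h, Or.inl (Or.inl ⟨rfl, rfl⟩)⟩

theorem omegaGraph_adj_succ {x y : {o : Ordinal // o < omega1}} (i : ℕ)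
    (h : (y : Ordinal) = x + 1) : (omegaGraph b).Adj (x, i) (y, i) := by
  rw [omegaGraph, SimpleGraph.fromRel_adj]
  refine ⟨fun he => ?_, Or.inl (Or.inr (Or.inl ⟨rfl, h⟩))⟩
  have : (x : Ordinal) = y := congrArg (fun v : Vtx => (v.1 : Ordinal)) he
  exact (Order.lt_succ (x : Ordinal)).ne (this.trans h)

theorem omegaGraph_adj_ladder {x y : {o : Ordinal // o < omega1}} (i : ℕ)
    (hy : Order.IsSuccLimit (y : Ordinal)) (hx : (x : Ordinal) = b y i)
    (hxy : (x : Ordinal) ≠ y) : (omegaGraph b).Adj (x, i) (y, i) := by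
  rw [omegaGraph, SimpleGraph.fromRel_adj]
  exact ⟨fun he => hxy (congrArg (fun v : Vtx => (v.1 : Ordinal)) he),
    Or.inl (Or.inr (Or.inr ⟨rfl, hy, hx⟩))⟩

theorem exists_isPath_column (x : {o : Ordinal // o < omega1}) (i j : ℕ) :
    ∃ p : (omegaGraph b).Walk (x, i) (x, j), p.IsPath ∧ ∀ v ∈ p.support, v.1 = x := by
  classical
  have hup : ∀ j, ∃ p : (omegaGraph b).Walk (x, 0) (x, j), ∀ v ∈ p.support, v.1 = x := by
    intro j
    induction j with
    | zero => exact ⟨.nil, by simp⟩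
    | succ j ih =>
      obtain ⟨p, hp⟩ := ih
      refine ⟨p.concat (omegaGraph_adj_vertical x j), fun v hv => ?_⟩
      simp only [support_concat, List.mem_append, List.mem_singleton] at hv
      exact hv.elim (hp v) fun hv => hv ▸ rfl
  obtain ⟨p, hp⟩ := hup i
  obtain ⟨q, hq⟩ := hup j
  refine ⟨(p.reverse.append q).bypass, (p.reverse.append q).bypass_isPath, fun v hv => ?_⟩
  have hv := (p.reverse.append q).support_bypass_subset_support hv
  simp only [mem_support_append_iff, support_reverse, List.mem_reverse] at hv
  exact hv.elim (hp v) (hq v)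

theorem exists_walk_up
    (hlt : ∀ α : Ordinal, α < omega1 → Order.IsSuccLimit α → ∀ n, b α n < α)
    (hconv : ∀ α : Ordinal, α < omega1 → Order.IsSuccLimit α →
      ∀ γ < α, ∃ n, γ ≤ b α n)
    (x : {o : Ordinal // o < omega1}) (e : ℕ) {σ : Ordinal} (hσ : σ < omega1)
    (hxσ : (x : Ordinal) < σ) (s : ℕ) :
    ∃ p : (omegaGraph b).Walk (x, e) (⟨σ, hσ⟩, s),
      ∀ v ∈ p.support, v = (x, e) ∨ (x : Ordinal) < v.1 ∧ (v.1 : Ordinal) ≤ σ := by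
  induction σ using WellFoundedLT.induction generalizing s with
  | _ σ ih =>
  obtain ⟨τ, hτσ, k, hadj, q, hq⟩ : ∃ τ, ∃ hτσ : τ < σ, ∃ k,
      (omegaGraph b).Adj (⟨τ, hτσ.trans hσ⟩, k) (⟨σ, hσ⟩, k) ∧
      ∃ q : (omegaGraph b).Walk (x, e) (⟨τ, hτσ.trans hσ⟩, k),
        ∀ v ∈ q.support, v = (x, e) ∨ (x : Ordinal) < v.1 ∧ (v.1 : Ordinal) ≤ τ := by
    rcases Ordinal.zero_or_succ_or_isSuccLimit σ with rfl | ⟨τ, rfl⟩ | hσlim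
    · exact absurd hxσ (not_lt_zero (a := (x : Ordinal)))
    · refine ⟨τ, Order.lt_succ τ, e, omegaGraph_adj_succ e rfl, ?_⟩
      rcases (Order.lt_succ_iff.mp hxσ).eq_or_lt with hxτ | hxτ
      · obtain rfl : x = ⟨τ, (Order.lt_succ τ).trans hσ⟩ := Subtype.ext hxτ
        exact ⟨.nil, by simp⟩
      · exact ih τ (Order.lt_succ τ) _ hxτ e
    · obtain ⟨k, hk⟩ := hconv σ hσ hσlim _ (hσlim.succ_lt hxσ)
      exact ⟨b σ k, hlt σ hσ hσlim k, k,
        omegaGraph_adj_ladder k hσlim rfl (hlt σ hσ hσlim k).ne,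
        ih _ (hlt σ hσ hσlim k) _ ((Order.lt_succ _).trans_le hk) k⟩
  obtain ⟨c, -, hc⟩ := exists_isPath_column (b := b) ⟨σ, hσ⟩ k s
  refine ⟨q.append (.cons hadj c), fun v hv => ?_⟩
  simp only [mem_support_append_iff, support_cons,
    List.mem_cons] at hv
  rcases hv with hv | rfl | hv
  · exact (hq v hv).imp_right fun h => ⟨h.1, h.2.trans hτσ.le⟩
  · exact (hq _ q.end_mem_support).imp_right fun h => ⟨h.1, h.2.trans hτσ.le⟩
  · exact Or.inr ⟨hxσ.trans_eq (congrArg Subtype.val (hc v hv)).symm, (hc v hv) ▸ le_rfl⟩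

theorem exists_isPath_to_limit
    (hlt : ∀ α : Ordinal, α < omega1 → Order.IsSuccLimit α → ∀ n, b α n < α)
    (hconv : ∀ α : Ordinal, α < omega1 → Order.IsSuccLimit α →
      ∀ γ < α, ∃ n, γ ≤ b α n)
    {x y : {o : Ordinal // o < omega1}} (hy : Order.IsSuccLimit (y : Ordinal)) (e s : ℕ)
    (hxy : (x : Ordinal) < b y s) :
    ∃ p : (omegaGraph b).Walk (x, e) (y, s), p.IsPath ∧
      ∀ v ∈ p.support,
        v = (x, e) ∨ v = (y, s) ∨ (v.1 : Ordinal) ∈ Set.Ioo (x : Ordinal) y := by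
  classical
  have hrung : b y s < y := hlt y y.2 hy s
  obtain ⟨q, hq⟩ := exists_walk_up hlt hconv x e (hrung.trans y.2) hxy s
  have hq' : ∀ v ∈ q.bypass.support,
      v = (x, e) ∨ (x : Ordinal) < v.1 ∧ (v.1 : Ordinal) < y :=
    fun v hv => (hq v (q.support_bypass_subset_support hv)).imp_right
      fun h => ⟨h.1, h.2.trans_lt hrung⟩
  have hadj : (omegaGraph b).Adj (⟨b y s, hrung.trans y.2⟩, s) (y, s) :=
    omegaGraph_adj_ladder s hy rfl hrung.ne
  refine ⟨q.bypass.concat hadj, q.bypass_isPath.concat (fun hy' => ?_) hadj, fun v hv => ?_⟩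
  · rcases hq' _ hy' with h | h
    · exact (hxy.trans hrung).ne' (congrArg (fun v : Vtx => (v.1 : Ordinal)) h)
    · exact h.2.false
  · simp only [support_concat, List.mem_append, List.mem_singleton] at hv
    rcases hv with hv | rfl
    · exact (hq' v hv).imp_right fun h => Or.inr h
    · exact Or.inr (Or.inl rfl)

theorem exists_levels
    (hmono : ∀ α : Ordinal, α < omega1 → Order.IsSuccLimit α → StrictMono (b α))
    (hconv : ∀ α : Ordinal, α < omega1 → Order.IsSuccLimit α →
      ∀ γ < α, ∃ n, γ ≤ b α n)
    (α : ℕ → Ordinal) (hα : ∀ n, α n < omega1) (hlim : ∀ n, Order.IsSuccLimit (α n))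
    (hinc : ∀ n, α n < α (n + 1)) :
    ∃ M : ℕ → ℕ, (∀ n, n < M n) ∧ ∀ n, α n < b (α (n + 1)) (M (n + 1)) := by
  have hK : ∀ n, ∃ k, n + 1 < k ∧ α n < b (α (n + 1)) k := fun n => by
    obtain ⟨k, hk⟩ := hconv _ (hα _) (hlim _) _ ((hlim (n + 1)).succ_lt (hinc n))
    exact ⟨max (n + 2) k, by omega, (Order.lt_succ _).trans_le
      (hk.trans ((hmono _ (hα _) (hlim _)).monotone (le_max_right _ _)))⟩
  choose K hKn hKb using hK
  exact ⟨fun | 0 => 1 | n + 1 => K n, fun | 0 => Nat.one_pos | n + 1 => hKn n, hKb⟩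

end OmegaGraph

/-- In `ω₁ # ℕ`, for every sequence of vertices `Γ = ⟨(α n, n)⟩` with `α`
strictly increasing limit ordinals below ω₁, there are paths `P n` from
`(α n, n)` to `(α (n+1), n+1)` inside the box between levels `α n` and
`α (n+1)`, and the union of these paths contains a comb whose teeth are
precisely the vertices of `Γ`. -/
theorem comb_with_prescribed_teeth (b : Ordinal → ℕ → Ordinal)
    (hmono : ∀ α : Ordinal, α < omega1 → Order.IsSuccLimit α → StrictMono (b α))
    (hlt : ∀ α : Ordinal, α < omega1 → Order.IsSuccLimit α → ∀ n, b α n < α)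
    (hconv : ∀ α : Ordinal, α < omega1 → Order.IsSuccLimit α → ∀ γ < α, ∃ n, γ ≤ b α n)
    (α : ℕ → Ordinal) (hα : ∀ n, α n < omega1) (hlim : ∀ n, Order.IsSuccLimit (α n))
    (hinc : ∀ n, α n < α (n + 1)) :
    ∃ (len : ℕ → ℕ) (P : ℕ → ℕ → Vtx),
      (∀ n, IsFinPath (omegaGraph b) (len n) (P n)) ∧
      (∀ n, P n 0 = (⟨α n, hα n⟩, n)) ∧
      (∀ n, P n (len n) = (⟨α (n + 1), hα (n + 1)⟩, n + 1)) ∧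
      (∀ n, ∀ k ≤ len n, α n ≤ ((P n k).1 : Ordinal) ∧ ((P n k).1 : Ordinal) ≤ α (n + 1)) ∧
      ∃ (spine : ℕ → Vtx) (blen : ℕ → ℕ) (br : ℕ → ℕ → Vtx),
        IsRay (omegaGraph b) spine ∧
        Set.range spine ⊆ ⋃ n, finPathSet (len n) (P n) ∧
        (∀ m, IsFinPath (omegaGraph b) (blen m) (br m)) ∧
        (∀ m, finPathSet (blen m) (br m) ⊆ ⋃ n, finPathSet (len n) (P n)) ∧
        (∀ m, br m 0 ∈ Set.range spine) ∧
        (∀ m, ∃ n, br m (blen m) = (⟨α n, hα n⟩, n)) ∧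
        (∀ n, ∃ m, br m (blen m) = (⟨α n, hα n⟩, n)) ∧
        (∀ m, ∀ k < blen m, ∀ n, br m k ≠ (⟨α n, hα n⟩, n)) ∧
        (∀ n, spine n ∉ {v : Vtx | ∃ m, v = (⟨α m, hα m⟩, m)}) ∧
        (∀ m m', m ≠ m' →
          Disjoint (finPathSet (blen m) (br m)) (finPathSet (blen m') (br m'))) := by
  obtain ⟨M, hMn, hMb⟩ := exists_levels hmono hconv α hα hlim hinc
  choose B hB hBcol using fun n => exists_isPath_column (b := b) ⟨α n, hα n⟩ (M n) n
  choose S hS hSmem using fun n => exists_isPath_to_limit hlt hconv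
    (x := ⟨α n, hα n⟩) (y := ⟨α (n + 1), hα (n + 1)⟩) (hlim (n + 1)) (M n) (M (n + 1))
    (hMb n)
  have hcomb : IsColumnComb (fun v : Vtx => (v.1 : Ordinal)) α B S :=
    ⟨strictMono_nat_of_lt_succ hinc, hB, fun n v hv => congrArg Subtype.val (hBcol n v hv), hS,
      hSmem, fun n he => (hMn n).ne' (congrArg Prod.snd he)⟩
  exact hcomb.exists_comb
end

section
/- The graph ω₁ # ℕ contains an ℵ₁-star of rays, and hence satisfies Halin's Degree Conjecture for its unique end of degree ℵ₁. -/
/-!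
The ladder values at level `n` form a regressive function on the stationary set of countable
limits, so Fodor's lemma, applied level by level, yields `c : ℕ → ω₁` such that for every `n` the
limits `α` with `b α k = c k` for all `k < n` form a stationary set. A ray `R` through such limits
passes through all the hubs `(c n, n)`. Above any `θ`, pick such limits `μ 0 < μ 1 < ⋯` with `μ n`
pinned up to level `n`. The columns in `[μ j, μ (j + 1))` induce a connected subgraph (induction
on the top column, along successor and ladder edges), so a ray runs through them, and the column
of `μ n` followed by the ladder edge at level `n` is a tooth onto the hub `(c n, n)`. For `θ` in
the club of closure points of these constructions the combs lie in pairwise disjoint column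
intervals above `R`, and a club in `ω₁` has `ℵ₁` points. Infinitely many disjoint teeth make
every leaf equivalent to `R`.
-/

open Order Cardinal Set Function

section Club

variable {α : Type*} [LinearOrder α] {s : Set α}

theorem isClub_Ioi [NoMaxOrder α] (a : α) : IsClub (Ioi a) := by
  refine ⟨(isUpperSet_Ioi (a := a)).dirSupClosed, fun x => ?_⟩
  obtain ⟨y, hy⟩ := exists_gt (max a x)
  exact ⟨y, (le_max_left a x).trans_lt hy, (le_max_right a x).trans hy.le⟩

theorem IsStationary.exists_gt [NoMaxOrder α] (hs : IsStationary s) (a : α) :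
    ∃ x ∈ s, a < x :=
  hs (isClub_Ioi a)

theorem Set.Countable.bddAbove_of_aleph0_lt_cof [NoMaxOrder α] (hα : ℵ₀ < cof α)
    (hs : s.Countable) : BddAbove s :=
  not_isCofinal_iff_bddAbove.1 fun h =>
    (cof_le h).not_gt (le_aleph0_iff_set_countable.2 hs |>.trans_lt hα)

variable [WellFoundedLT α]

attribute [local instance]
  WellFoundedLT.toOrderBot WellFoundedLT.conditionallyCompleteLinearOrderBot

theorem isClub_setOf_forall_lt_mem [IsRegularCardinalOrder α] [NoMaxOrder α]
    (hα : ℵ₀ < cof α) {C : α → Set α} (hC : ∀ y, IsClub (C y)) :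
    IsClub {x | ∀ y < x, x ∈ C y} := by
  refine ⟨dirSupClosed_iff_of_linearOrder.2 fun d hd _ a ha y hya => ?_, fun a => ?_⟩
  · obtain ⟨z, hzd, hyz, -⟩ := ha.exists_between hya
    refine (hC y).isLUB_mem (t := {z ∈ d | y < z}) (fun w hw => hd hw.1 y hw.2) ⟨z, hzd, hyz⟩
      ⟨fun w hw => ha.1 hw.1, fun u hu => ha.2 fun w hw => ?_⟩
    rcases lt_or_ge y w with hyw | hwy
    · exact hu ⟨hw, hyw⟩
    · exact hwy.trans (hyz.le.trans (hu ⟨hzd, hyz⟩))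
  · -- Iterate `x ↦` a point of `⋂ y < x, C y` above `x`; the supremum of the iterates then lies
    -- in every `C y` with `y` below it.
    have : Nonempty α := ⟨a⟩
    have hinter : ∀ x : α, IsClub (⋂ y : Iio x, C y) := fun x =>
      IsClub.iInter hα.ne' (by simpa using mk_Iio_lt x (ord_cardinalMk (α := α))) fun y => hC y
    choose F hF hxF using fun x => (hinter x).isCofinal x
    set g : ℕ → α := fun n => F^[n] a
    have hg_succ : ∀ n, g (n + 1) = F (g n) := fun n => iterate_succ_apply' F n a
    have hg : Monotone g := monotone_nat_of_le_succ fun n => (hg_succ n).symm ▸ hxF (g n)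
    have hbdd : BddAbove (range g) := (countable_range g).bddAbove_of_aleph0_lt_cof hα
    refine ⟨sSup (range g), fun y hy => ?_, le_csSup hbdd ⟨0, rfl⟩⟩
    obtain ⟨_, ⟨k, rfl⟩, hyk⟩ := exists_lt_of_lt_csSup (range_nonempty g) hy
    refine (hC y).isLUB_mem (t := range fun n => g (n + k + 1)) ?_ (range_nonempty _)
      ⟨?_, fun u hu => csSup_le (range_nonempty g) ?_⟩
    · rintro _ ⟨n, rfl⟩
      simp only [hg_succ]
      exact mem_iInter.1 (hF (g (n + k))) ⟨y, hyk.trans_le (hg (by omega))⟩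
    · rintro _ ⟨n, rfl⟩
      exact le_csSup hbdd ⟨_, rfl⟩
    · rintro _ ⟨n, rfl⟩
      exact (hg (by omega : n ≤ n + k + 1)).trans (hu ⟨n, rfl⟩)

/-- Fodor's pressing-down lemma. -/
theorem IsStationary.exists_isStationary_of_forall_exists_lt [IsRegularCardinalOrder α]
    [NoMaxOrder α] (hα : ℵ₀ < cof α) (hs : IsStationary s) {p : α → α → Prop}
    (hp : ∀ x ∈ s, ∃ y < x, p x y) : ∃ y, IsStationary {x ∈ s | p x y} := by
  by_contra! h
  simp_rw [not_isStationary_iff] at h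
  choose C hC hsC using h
  obtain ⟨x, hxs, hxC⟩ := hs (isClub_setOf_forall_lt_mem hα hC)
  obtain ⟨y, hyx, hpxy⟩ := hp x hxs
  exact (hsC y).notMem_of_mem_left ⟨hxs, hpxy⟩ (hxC y hyx)

end Club

theorem exists_strictMono_forall_mem {α : Type*} [Preorder α] {S : ℕ → Set α}
    (h : ∀ n x, ∃ y ∈ S n, x < y) (a : α) :
    ∃ μ : ℕ → α, StrictMono μ ∧ a < μ 0 ∧ ∀ n, μ n ∈ S n := by
  choose f hfS hf using h
  let μ : ℕ → α := fun n => Nat.rec (f 0 a) (fun n y => f (n + 1) y) n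
  refine ⟨μ, strictMono_nat_of_lt_succ fun n => hf _ _, hf 0 a, fun n => ?_⟩
  cases n with
  | zero => exact hfS 0 a
  | succ n => exact hfS (n + 1) _

/-- The type `ω₁`; the vertex type `Vtx` is `CountableOrdinal × ℕ`. -/
abbrev CountableOrdinal : Type 1 := {o : Ordinal.{0} // o < omega1}

namespace CountableOrdinal

theorem isSuccLimit_omega1 : IsSuccLimit omega1 := isSuccLimit_ord (aleph0_le_aleph 1)

instance : Nonempty CountableOrdinal := ⟨⟨0, isSuccLimit_omega1.bot_lt⟩⟩

instance : NoMaxOrder CountableOrdinal :=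
  ⟨fun a => ⟨⟨a.1 + 1, isSuccLimit_omega1.add_one_lt a.2⟩, by
    show a.1 < a.1 + 1; exact lt_add_one _⟩⟩

theorem cof_eq : cof CountableOrdinal = ℵ₁ := by
  show cof (Iio omega1) = _
  rw [Ordinal.cof_Iio, ← Ordinal.lift_cof, omega1, isRegular_aleph_one.cof_ord]
  simp

theorem aleph0_lt_cof : ℵ₀ < cof CountableOrdinal := by
  rw [cof_eq]; exact aleph0_lt_aleph_one

instance : IsRegularCardinalOrder CountableOrdinal where
  type_lt_le_ord_cof := by
    rw [cof_eq]
    show Ordinal.type (α := Iio omega1) (· < ·) ≤ _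
    rw [Ordinal.type_lt_Iio, omega1, Cardinal.lift_ord, lift_aleph]
    simp

theorem isClub_setOf_isSuccLimit : IsClub {α : CountableOrdinal | IsSuccLimit α.1} := by
  refine ⟨dirSupClosed_iff_of_linearOrder.2 fun d hd ⟨z, hz⟩ a ha => ?_, fun x => ?_⟩
  · rcases Ordinal.zero_or_succ_or_isSuccLimit a.1 with h | ⟨c, h⟩ | h
    · exact absurd ((hd hz).bot_lt.trans_le (show z.1 ≤ a.1 from ha.1 hz)) (by simp [h])
    · have hc : c < omega1 := (lt_succ c).trans (h ▸ a.2)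
      have hca : (⟨c, hc⟩ : CountableOrdinal) < a := by
        show c < a.1; rw [← h]; exact lt_succ c
      obtain ⟨w, hw, hcw, hwa⟩ := ha.exists_between hca
      have hwa' : w = a := le_antisymm hwa (by
        show a.1 ≤ w.1; rw [← h]; exact succ_le_of_lt hcw)
      exact hwa' ▸ hd hw
    · exact h
  · have hω : Ordinal.omega0 < omega1 := by
      rw [omega1, ← Cardinal.ord_aleph0]; exact ord_lt_ord.2 aleph0_lt_aleph_one
    refine ⟨⟨x.1 + Ordinal.omega0, Ordinal.isPrincipal_add_ord (aleph0_le_aleph 1) x.2 hω⟩, ?_, ?_⟩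
    · exact Ordinal.isSuccLimit_add _ Ordinal.isSuccLimit_omega0
    · show x.1 ≤ x.1 + Ordinal.omega0; exact le_self_add

theorem exists_forall_le (f : ℕ → CountableOrdinal) : ∃ B, ∀ n, f n ≤ B :=
  ((countable_range f).bddAbove_of_aleph0_lt_cof aleph0_lt_cof).imp fun _ hB n => hB ⟨n, rfl⟩

theorem exists_injective_separated {ι : Type} (hι : #ι ≤ ℵ₁)
    (g : CountableOrdinal → CountableOrdinal) (a : CountableOrdinal) :
    ∃ θ : ι → CountableOrdinal, Injective θ ∧
      (∀ i, a < θ i) ∧ ∀ i j, θ i < θ j → g (θ i) < θ j := by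
  let D := Ioi a ∩ {x | ∀ y < x, x ∈ Ioi (g y)}
  have hD : IsClub D := (isClub_Ioi a).inter aleph0_lt_cof.ne'
    (isClub_setOf_forall_lt_mem aleph0_lt_cof fun y => isClub_Ioi (g y))
  obtain ⟨f⟩ : Nonempty (ι ↪ D) := by
    rw [← lift_mk_le', lift_uzero]
    calc lift.{1} #ι ≤ lift.{1} ℵ₁ := lift_le.2 hι
      _ = cof CountableOrdinal := by rw [cof_eq, lift_aleph, Ordinal.lift_one]
      _ ≤ #D := cof_le hD.isCofinal
  exact ⟨fun i => (f i).1, Subtype.val_injective.comp f.injective, fun i => (f i).2.1,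
    fun i j hij => (f j).2.2 _ hij⟩

end CountableOrdinal

namespace SimpleGraph

variable {V : Type*} {G : SimpleGraph V}

theorem Walk.IsPath.isFinPath_s13 {u v : V} {p : G.Walk u v} (hp : p.IsPath) :
    IsFinPath G p.length p.getVert :=
  ⟨hp.getVert_injOn, fun _ hk => p.adj_getVert_succ hk⟩

theorem Walk.finPathSet_getVert_s13 {u v : V} (p : G.Walk u v) :
    finPathSet p.length p.getVert = {x | x ∈ p.support} := by
  ext x
  simp only [finPathSet, Set.mem_image, Set.mem_Iic, Set.mem_ofPred_eq,
    Walk.mem_support_iff_exists_getVert]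
  exact exists_congr fun n => and_comm

theorem Walk.IsPath.append {u v w : V} {p : G.Walk u v} {q : G.Walk v w} (hp : p.IsPath)
    (hq : q.IsPath) (hpq : ∀ x ∈ p.support, x ∈ q.support → x = v) : (p.append q).IsPath := by
  rw [isPath_def, support_append, List.nodup_append]
  refine ⟨hp.support_nodup, hq.support_nodup.sublist (List.tail_sublist _), fun x hx y hy hxy => ?_⟩
  subst hxy
  have hxv := hpq x hx (List.mem_of_mem_tail hy)
  subst hxv
  have hnodup := hq.support_nodup
  rw [← q.cons_tail_support, List.nodup_cons] at hnodup
  exact hnodup.1 hy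

theorem exists_isPath_of_reachable_induce {s : Set V} {u v w : V} {hu : u ∈ s} {hv : v ∈ s}
    (h : (G.induce s).Reachable ⟨u, hu⟩ ⟨v, hv⟩) (hvw : G.Adj v w) (hw : w ∉ s) :
    ∃ p : G.Walk u w, p.IsPath ∧ ∀ x ∈ p.support, x ∈ s ∨ x = w := by
  obtain ⟨q, hq, hqs⟩ : ∃ q : G.Walk u v, q.IsPath ∧ ∀ x ∈ q.support, x ∈ s := by
    obtain ⟨q, hq⟩ := h.exists_isPath
    have hqs : ∀ x ∈ (q.map (Embedding.induce s).toHom).support, x ∈ s := by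
      intro x hx
      rw [Walk.support_map] at hx
      obtain ⟨y, -, rfl⟩ := List.mem_map.1 hx
      exact y.2
    exact ⟨_, hq.map Subtype.val_injective, hqs⟩
  refine ⟨q.concat hvw, hq.concat (fun h => hw (hqs _ h)) hvw, fun x hx => ?_⟩
  simp only [Walk.support_concat, List.mem_append, List.mem_singleton] at hx
  exact hx.imp (hqs x) id

/-- The concatenation `p 0 ++ ⋯ ++ p (j - 1)`. -/
def Walk.appendRange {x : ℕ → V} (p : ∀ j, G.Walk (x j) (x (j + 1))) :
    ∀ j, G.Walk (x 0) (x j)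
  | 0 => .nil
  | j + 1 => (appendRange p j).append (p j)

section appendRange

variable {x : ℕ → V} {p : ∀ j, G.Walk (x j) (x (j + 1))}

theorem Walk.length_appendRange_mono : Monotone fun j => (appendRange p j).length :=
  monotone_nat_of_le_succ fun j => by simp [appendRange]

theorem Walk.le_length_appendRange (hp : ∀ j, ¬ (p j).Nil) (j : ℕ) :
    j ≤ (appendRange p j).length := by
  induction j with
  | zero => simp
  | succ j ih =>
    have := (p j).not_nil_iff_lt_length.1 (hp j)
    simp only [appendRange, length_append]
    omega

theorem Walk.getVert_appendRange_of_le {j k i : ℕ} (hjk : j ≤ k)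
    (hi : i ≤ (appendRange p j).length) :
    (appendRange p k).getVert i = (appendRange p j).getVert i := by
  induction k, hjk using Nat.le_induction with
  | base => rfl
  | succ k hjk ih =>
    rw [appendRange, getVert_append', if_pos (hi.trans (length_appendRange_mono hjk)), ih]

theorem Walk.isPath_appendRange {B : ℕ → Set V} (hB : Pairwise (Disjoint on B))
    (hx : ∀ j, x j ∈ B j) (hp : ∀ j, (p j).IsPath)
    (hpB : ∀ j, ∀ v ∈ (p j).support, v ∈ B j ∨ v = x (j + 1)) (j : ℕ) :
    (appendRange p j).IsPath ∧ ∀ v ∈ (appendRange p j).support, v = x j ∨ ∃ i < j, v ∈ B i := by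
  induction j with
  | zero => simp [appendRange]
  | succ j ih =>
    obtain ⟨hpath, hsupp⟩ := ih
    have hnot : ∀ {v i}, i < j → v ∈ B i → v ∉ (p j).support := fun {v i} hij hvi hv =>
      (hpB j _ hv).elim (fun hvj => (hB hij.ne).ne_of_mem hvi hvj rfl)
        (fun h => (hB (by omega : i ≠ j + 1)).ne_of_mem hvi (h ▸ hx (j + 1)) rfl)
    refine ⟨hpath.append (hp j) fun v hv hvp => ?_, fun v hv => ?_⟩
    · obtain h | ⟨i, hij, hvi⟩ := hsupp v hv
      · exact h
      · exact absurd hvp (hnot hij hvi)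
    · rcases (mem_support_append_iff _ _).1 hv with hv | hv
      · obtain rfl | ⟨i, hij, hvi⟩ := hsupp v hv
        · exact Or.inr ⟨j, by omega, hx _⟩
        · exact Or.inr ⟨i, by omega, hvi⟩
      · obtain hvj | rfl := hpB j v hv
        · exact Or.inr ⟨j, by omega, hvj⟩
        · exact Or.inl rfl

end appendRange

theorem exists_isRay_of_reachable_induce {B : ℕ → Set V} (hB : Pairwise (Disjoint on B))
    {x : ℕ → V} (hx : ∀ j, x j ∈ B j)
    (hstep : ∀ j, ∃ y, ∃ hy : y ∈ B j,
      (G.induce (B j)).Reachable ⟨x j, hx j⟩ ⟨y, hy⟩ ∧ G.Adj y (x (j + 1))) :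
    ∃ r : ℕ → V, IsRay G r ∧ Set.range r ⊆ ⋃ j, B j ∧ ∀ j, x j ∈ Set.range r := by
  have hpath : ∀ j, ∃ p : G.Walk (x j) (x (j + 1)), p.IsPath ∧
      ∀ v ∈ p.support, v ∈ B j ∨ v = x (j + 1) := fun j => by
    obtain ⟨y, hy, hreach, hadj⟩ := hstep j
    exact exists_isPath_of_reachable_induce hreach hadj
      fun h => (hB (Nat.succ_ne_self j)).ne_of_mem (hx (j + 1)) h rfl
  choose p hp hpB using hpath
  have hnil : ∀ j, ¬ (p j).Nil := fun j hnil =>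
    (hB (Nat.succ_ne_self j)).ne_of_mem (hx (j + 1)) (hnil.eq ▸ hx j) rfl
  have hW := Walk.isPath_appendRange hB hx hp hpB
  have hlen := Walk.le_length_appendRange hnil
  have hW_eq : ∀ n k, n < k →
      (Walk.appendRange p k).getVert n = (Walk.appendRange p (n + 1)).getVert n :=
    fun n k hnk => Walk.getVert_appendRange_of_le (by omega) ((hlen _).trans' (by omega))
  refine ⟨fun n => (Walk.appendRange p (n + 1)).getVert n, ⟨fun n m hnm => ?_, fun n => ?_⟩, ?_,
    fun j => ⟨(Walk.appendRange p j).length, ?_⟩⟩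
  · refine (hW (max n m + 1)).1.getVert_injOn ((hlen _).trans' (by omega))
      ((hlen _).trans' (by omega)) ?_
    rw [hW_eq n _ (by omega), hW_eq m _ (by omega)]
    exact hnm
  · dsimp only
    rw [← hW_eq n (n + 2) (by omega)]
    exact (Walk.appendRange p (n + 2)).adj_getVert_succ ((hlen _).trans_lt' (by omega))
  · rintro _ ⟨n, rfl⟩
    obtain h | ⟨i, -, hi⟩ := (hW (n + 1)).2 _ (Walk.getVert_mem_support _ n)
    · exact Set.mem_iUnion.2 ⟨n + 1, by dsimp only; rw [h]; exact hx _⟩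
    · exact Set.mem_iUnion.2 ⟨i, hi⟩
  · have := hlen j
    dsimp only
    rw [Walk.getVert_appendRange_of_le (by omega) le_rfl, Walk.getVert_length]

end SimpleGraph

section StarOfRays

variable {V : Type*} {G : SimpleGraph V}

theorem IsFinPath.reachable_induce {s : Set V} {m : ℕ} {q : ℕ → V} (hq : IsFinPath G m q)
    (hs : finPathSet m q ⊆ s) :
    (G.induce s).Reachable ⟨q 0, hs ⟨0, Set.mem_Iic.2 m.zero_le, rfl⟩⟩
      ⟨q m, hs ⟨m, Set.mem_Iic.2 le_rfl, rfl⟩⟩ := by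
  suffices ∀ k (hk : k ≤ m), (G.induce s).Reachable ⟨q 0, hs ⟨0, Set.mem_Iic.2 m.zero_le, rfl⟩⟩
      ⟨q k, hs ⟨k, Set.mem_Iic.2 hk, rfl⟩⟩ from this m le_rfl
  intro k hk
  induction k with
  | zero => rfl
  | succ k ih => exact (ih (by omega)).trans (SimpleGraph.Adj.reachable (hq.2 k (by omega)))

theorem IsStarOfRays.rayEquiv {ι : Type*} {R : ℕ → V} {leaf : ι → ℕ → V}
    (h : IsStarOfRays G R leaf) (i : ι) : RayEquiv G (leaf i) R := by
  obtain ⟨-, -, -, -, len, p, hp, hp0, hpR, hdisj, -⟩ := h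
  intro S hS
  -- The teeth of `leaf i` are pairwise disjoint, so only finitely many of them meet `S`.
  obtain ⟨n, hn⟩ : ∃ n, Disjoint (finPathSet (len i n) (p i n)) S := by
    by_contra! hmeet
    simp only [Set.not_disjoint_iff] at hmeet
    choose f hfp hfS using hmeet
    have hf : Injective f := fun m n hmn => by
      by_contra hne
      exact (hdisj i m n hne).ne_of_mem (hfp m) (hmn ▸ hfp n) rfl
    exact Set.infinite_range_of_injective hf (hS.subset (range_subset_iff.2 hfS))
  have hsub : finPathSet (len i n) (p i n) ⊆ Sᶜ := hn.subset_compl_right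
  obtain ⟨a, ha⟩ := hp0 i n
  obtain ⟨c, hc⟩ := hpR i n
  refine ⟨a, c, ha ▸ hsub ⟨0, by simp, rfl⟩, hc ▸ hsub ⟨_, Set.mem_Iic.2 le_rfl, rfl⟩, ?_⟩
  convert IsFinPath.reachable_induce (hp i n) hsub using 2

theorem isStarOfRays_of_pairwise_disjoint {ι : Type*} {R : ℕ → V} {leaf : ι → ℕ → V}
    {len : ι → ℕ → ℕ} {p : ι → ℕ → ℕ → V} (A : ι → Set V) (hA : Pairwise (Disjoint on A))
    (hAR : ∀ i, Disjoint (A i) (range R)) (hR : IsRay G R) (hleaf : ∀ i, IsRay G (leaf i))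
    (hleafA : ∀ i, range (leaf i) ⊆ A i) (hp : ∀ i n, IsFinPath G (len i n) (p i n))
    (hp0 : ∀ i n, p i n 0 ∈ range (leaf i)) (hpR : ∀ i n, p i n (len i n) ∈ range R)
    (hpA : ∀ i n, finPathSet (len i n) (p i n) ⊆ A i ∪ range R)
    (hdisj : ∀ i m n, m ≠ n →
      Disjoint (finPathSet (len i m) (p i m)) (finPathSet (len i n) (p i n))) :
    IsStarOfRays G R leaf := by
  refine ⟨hR, hleaf, fun i j hij => (hA hij).mono (hleafA i) (hleafA j),
    fun i => (hAR i).mono_left (hleafA i), len, p, hp, hp0, hpR, hdisj,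
    fun i j hij m n x hxi hxj => ?_⟩
  obtain hxi | hxR := hpA i m hxi
  · obtain hxj | hxR := hpA j n hxj
    · exact absurd rfl ((hA hij).ne_of_mem hxi hxj)
    · exact hxR
  · exact hxR

end StarOfRays

open SimpleGraph

variable {b : Ordinal → ℕ → Ordinal}

structure IsLadderSystem (b : Ordinal → ℕ → Ordinal) : Prop where
  lt : ∀ α < omega1, IsSuccLimit α → ∀ n, b α n < α
  exists_le : ∀ α < omega1, IsSuccLimit α → ∀ γ < α, ∃ n, γ ≤ b α n

theorem omegaGraph_adj_up (α : CountableOrdinal) (n : ℕ) :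
    (omegaGraph b).Adj (α, n) (α, n + 1) :=
  (fromRel_adj _ _ _).2 ⟨fun h => by simpa using congrArg Prod.snd h, .inl (.inl ⟨rfl, rfl⟩)⟩

theorem omegaGraph_adj_succ_s13 {α β : CountableOrdinal} (h : β.1 = α.1 + 1) (n : ℕ) :
    (omegaGraph b).Adj (α, n) (β, n) :=
  (fromRel_adj _ _ _).2 ⟨fun hαβ => (lt_add_one α.1).ne (by
    rw [← h]; exact congrArg (fun v : Vtx => v.1.1) hαβ), .inl (.inr (.inl ⟨rfl, h⟩))⟩

theorem omegaGraph_adj_ladder_s13 {α β : CountableOrdinal} {n : ℕ} (hβ : IsSuccLimit β.1)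
    (h : α.1 = b β n) (hαβ : α < β) : (omegaGraph b).Adj (α, n) (β, n) :=
  (fromRel_adj _ _ _).2 ⟨fun h' => hαβ.ne (congrArg Prod.fst h'),
    .inl (.inr (.inr ⟨rfl, hβ, h⟩))⟩

theorem omegaGraph_connected_induce_column (α : CountableOrdinal) :
    ((omegaGraph b).induce (Prod.fst ⁻¹' {α} : Set Vtx)).Connected := by
  rw [connected_iff_exists_forall_reachable]
  refine ⟨⟨(α, 0), rfl⟩, fun ⟨⟨a, n⟩, (ha : a = α)⟩ => ?_⟩
  subst ha
  induction n with
  | zero => rfl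
  | succ n ih => exact ih.trans (Adj.reachable (omegaGraph_adj_up (b := b) a n))

theorem exists_isFinPath_omegaGraph_column_ladder {α c : CountableOrdinal} {n : ℕ}
    (hα : IsSuccLimit α.1) (hc : c.1 = b α n) (hcα : c < α) (e : ℕ) :
    ∃ m q, IsFinPath (omegaGraph b) m q ∧ q 0 = (α, e) ∧ q m = (c, n) ∧
      finPathSet m q ⊆ insert ((c, n) : Vtx) (Prod.fst ⁻¹' {α}) := by
  obtain ⟨p, hp, hpα⟩ := exists_isPath_of_reachable_induce
    ((omegaGraph_connected_induce_column α).preconnected ⟨(α, e), rfl⟩ ⟨(α, n), rfl⟩)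
    (omegaGraph_adj_ladder_s13 hα hc hcα).symm (fun h => hcα.ne h)
  refine ⟨p.length, p.getVert, hp.isFinPath_s13, p.getVert_zero, p.getVert_length, ?_⟩
  rw [p.finPathSet_getVert_s13]
  exact fun v hv => (hpα v hv).elim Or.inr Or.inl

def pinnedLimits (b : Ordinal → ℕ → Ordinal) (c : ℕ → CountableOrdinal) (n : ℕ) :
    Set CountableOrdinal :=
  {α | IsSuccLimit α.1 ∧ ∀ k < n, b α k = c k}

theorem exists_strictMono_mem_pinnedLimits {c : ℕ → CountableOrdinal}
    (hc : ∀ n, IsStationary (pinnedLimits b c n)) (m : ℕ) (a : CountableOrdinal) :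
    ∃ μ : ℕ → CountableOrdinal, StrictMono μ ∧ a < μ 0 ∧ ∀ n, μ n ∈ pinnedLimits b c (n + m) :=
  exists_strictMono_forall_mem (fun n x => (hc (n + m)).exists_gt x) a

theorem pairwise_disjoint_insert_column {c ρ : ℕ → CountableOrdinal} (hcρ : ∀ m n, c m < ρ n)
    (hρ : Injective ρ) :
    Pairwise (Disjoint on fun n => insert ((c n, n) : Vtx) (Prod.fst ⁻¹' {ρ n})) :=
  fun m n hmn => disjoint_left.2 fun v hvm hvn => by
    rcases hvm with rfl | hvm <;> rcases hvn with hvn | hvn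
    · exact hmn (congrArg Prod.snd hvn)
    · exact (hcρ m n).ne hvn
    · subst hvn
      exact (hcρ n m).ne hvm
    · exact hmn (hρ ((eq_of_mem_singleton hvm).symm.trans hvn))

theorem exists_isRay_omegaGraph_through_pinned {c : ℕ → CountableOrdinal}
    (hc : ∀ n, IsStationary (pinnedLimits b c n)) :
    ∃ (R : ℕ → Vtx) (β : CountableOrdinal), IsRay (omegaGraph b) R ∧
      (∀ n, ((c n, n) : Vtx) ∈ range R) ∧ ∀ k, (R k).1 ≤ β := by
  obtain ⟨C, hC⟩ := CountableOrdinal.exists_forall_le c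
  obtain ⟨ρ, hρ, hCρ, hρS⟩ := exists_strictMono_mem_pinnedLimits hc 2 C
  have hcρ : ∀ m n, c m < ρ n := fun m n => (hC m).trans_lt (hCρ.trans_le (hρ.monotone n.zero_le))
  obtain ⟨P, hP⟩ := CountableOrdinal.exists_forall_le ρ
  let B : ℕ → Set Vtx := fun n => insert ((c n, n) : Vtx) (Prod.fst ⁻¹' {ρ n})
  have hB : Pairwise (Disjoint on B) := pairwise_disjoint_insert_column hcρ hρ.injective
  have hstep : ∀ n, ∃ y, ∃ hy : y ∈ B n, ((omegaGraph b).induce (B n)).Reachable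
      ⟨(c n, n), mem_insert _ _⟩ ⟨y, hy⟩ ∧ (omegaGraph b).Adj y (c (n + 1), n + 1) := fun n => by
    obtain ⟨hlim, hpin⟩ := hρS n
    refine ⟨(ρ n, n + 1), Or.inr rfl, ?_, ?_⟩
    · have hladder : ((omegaGraph b).induce (B n)).Adj ⟨(c n, n), mem_insert _ _⟩
          ⟨(ρ n, n), Or.inr rfl⟩ := omegaGraph_adj_ladder_s13 hlim (hpin n (by omega)).symm (hcρ n n)
      have hup : ((omegaGraph b).induce (B n)).Adj ⟨(ρ n, n), Or.inr rfl⟩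
          ⟨(ρ n, n + 1), Or.inr rfl⟩ := omegaGraph_adj_up _ n
      exact hladder.reachable.trans hup.reachable
    · exact (omegaGraph_adj_ladder_s13 hlim (hpin (n + 1) (by omega)).symm (hcρ _ n)).symm
  obtain ⟨R, hR, hRB, hRc⟩ := exists_isRay_of_reachable_induce hB (fun n => mem_insert _ _) hstep
  refine ⟨R, max C P, hR, hRc, fun k => ?_⟩
  obtain ⟨n, hk | (hk : (R k).1 = ρ n)⟩ := mem_iUnion.1 (hRB ⟨k, rfl⟩)
  · exact hk ▸ (hC n).trans (le_max_left _ _)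
  · exact hk ▸ (hP n).trans (le_max_right _ _)

namespace IsLadderSystem

variable (hb : IsLadderSystem b)
include hb

theorem exists_adj_of_lt {γ T : CountableOrdinal} (hγT : γ < T) :
    ∃ T' : CountableOrdinal, γ ≤ T' ∧ T' < T ∧ ∃ k, (omegaGraph b).Adj (T', k) (T, k) := by
  rcases Ordinal.zero_or_succ_or_isSuccLimit T.1 with h | ⟨c, h⟩ | h
  · exact absurd (h ▸ hγT : γ.1 < 0) zero_le.not_gt
  · have hc : c < omega1 := (lt_succ c).trans (h ▸ T.2)
    refine ⟨⟨c, hc⟩, ?_, ?_, 0, omegaGraph_adj_succ_s13 (by rw [← h, succ_eq_add_one]) 0⟩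
    · show γ.1 ≤ c
      exact lt_succ_iff.1 (h ▸ hγT : γ.1 < succ c)
    · exact (lt_succ c).trans_eq h
  · obtain ⟨n, hn⟩ := hb.exists_le T.1 T.2 h γ.1 hγT
    have hlt := hb.lt T.1 T.2 h n
    exact ⟨⟨b T n, hlt.trans T.2⟩, hn, hlt, n, omegaGraph_adj_ladder_s13 h rfl hlt⟩

theorem connected_induce_Icc {β T : CountableOrdinal} (hβT : β ≤ T) :
    ((omegaGraph b).induce (Prod.fst ⁻¹' Icc β T : Set Vtx)).Connected := by
  induction T using WellFoundedLT.induction with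
  | _ T ih =>
  refine induce_connected_of_patches (T, 0) ⟨hβT, le_rfl⟩ fun {v} hv => ?_
  rcases hv.2.lt_or_eq with hvT | hvT
  · obtain ⟨T', hT', hT'T, k, hadj⟩ := hb.exists_adj_of_lt (max_lt (hv.1.trans_lt hvT) hvT)
    have hβT' : β ≤ T' := (le_max_left _ _).trans hT'
    refine ⟨Prod.fst ⁻¹' Icc β T' ∪ Prod.fst ⁻¹' {T}, ?_, Or.inr rfl,
      Or.inl ⟨hv.1, (le_max_right _ _).trans hT'⟩, ?_⟩
    · rintro w (hw | (hw : w.1 = T))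
      · exact ⟨hw.1, hw.2.trans hT'T.le⟩
      · exact ⟨hw ▸ hβT, hw.le⟩
    · exact (connected_induce_union (ih T' hT'T hβT').preconnected
        (omegaGraph_connected_induce_column T).preconnected ⟨hβT', le_rfl⟩ rfl
        hadj).preconnected _ _
  · refine ⟨Prod.fst ⁻¹' {T}, fun w (hw : w.1 = T) => ⟨hw ▸ hβT, hw.le⟩, rfl, hvT, ?_⟩
    exact (omegaGraph_connected_induce_column T).preconnected _ _

theorem exists_isStationary_pinnedLimits :
    ∃ c : ℕ → CountableOrdinal, ∀ n, IsStationary (pinnedLimits b c n) := by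
  let L : Set CountableOrdinal := {α | IsSuccLimit α.1}
  have hstep : ∀ s : {s : Set CountableOrdinal // IsStationary s ∧ s ⊆ L}, ∀ n,
      ∃ c : CountableOrdinal, IsStationary {α ∈ s.1 | b α n = c} := fun s n =>
    s.2.1.exists_isStationary_of_forall_exists_lt CountableOrdinal.aleph0_lt_cof fun α hα =>
      have hlt := hb.lt α.1 α.2 (s.2.2 hα) n
      ⟨⟨b α n, hlt.trans α.2⟩, hlt, rfl⟩
  choose g hg using hstep
  let T : ℕ → {s : Set CountableOrdinal // IsStationary s ∧ s ⊆ L} := fun n =>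
    Nat.rec ⟨L, CountableOrdinal.isClub_setOf_isSuccLimit.isStationary
      CountableOrdinal.aleph0_lt_cof.ne', subset_rfl⟩
      (fun n s => ⟨{α ∈ s.1 | b α n = g s n}, hg s n, fun α hα => s.2.2 hα.1⟩) n
  refine ⟨fun n => g (T n) n, fun n => (T n).2.1.mono fun α hα => ⟨(T n).2.2 hα, ?_⟩⟩
  induction n with
  | zero => simp
  | succ n ih =>
    intro k hk
    rcases (Nat.lt_succ_iff_lt_or_eq.1 hk) with hk | rfl
    · exact ih hα.1 k hk
    · exact hα.2

theorem exists_isRay_through_columns {μ : ℕ → CountableOrdinal} (hμ : StrictMono μ)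
    (hlim : ∀ n, IsSuccLimit (μ n).1) :
    ∃ r : ℕ → Vtx, IsRay (omegaGraph b) r ∧ (∀ k, μ 0 ≤ (r k).1 ∧ ∃ n, (r k).1 < μ n) ∧
      ∀ n, ∃ e, ((μ n, e) : Vtx) ∈ range r := by
  choose m hm using fun j => hb.exists_le _ (μ (j + 1)).2 (hlim (j + 1)) _ (hμ j.lt_succ_self)
  -- The ray enters column `μ (j + 1)` at level `m j`, along the ladder edge from
  -- `b (μ (j + 1)) (m j)`.
  let x : ℕ → Vtx := fun j => (μ j, Nat.casesOn j 0 m)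
  let B : ℕ → Set Vtx := fun j => Prod.fst ⁻¹' Ico (μ j) (μ (j + 1))
  have hB : Pairwise (Disjoint on B) := fun i j hij =>
    (hμ.monotone.pairwise_disjoint_on_Ico_succ hij).preimage _
  have hx : ∀ j, x j ∈ B j := fun j => ⟨le_rfl, hμ j.lt_succ_self⟩
  have hstep : ∀ j, ∃ y, ∃ hy : y ∈ B j, ((omegaGraph b).induce (B j)).Reachable ⟨x j, hx j⟩
      ⟨y, hy⟩ ∧ (omegaGraph b).Adj y (x (j + 1)) := fun j => by
    have hlt := hb.lt _ (μ (j + 1)).2 (hlim (j + 1)) (m j)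
    let y : CountableOrdinal := ⟨b (μ (j + 1)) (m j), hlt.trans (μ (j + 1)).2⟩
    have hIcc : Prod.fst ⁻¹' Icc (μ j) y ⊆ B j := fun v hv => ⟨hv.1, hv.2.trans_lt hlt⟩
    refine ⟨(y, m j), hIcc ⟨hm j, le_rfl⟩, ?_, omegaGraph_adj_ladder_s13 (hlim (j + 1)) rfl hlt⟩
    exact ((hb.connected_induce_Icc (hm j)).preconnected ⟨x j, le_rfl, hm j⟩
      ⟨(y, m j), hm j, le_rfl⟩).map (induceHomOfLE _ hIcc).toHom
  obtain ⟨r, hr, hrB, hrx⟩ := exists_isRay_of_reachable_induce hB hx hstep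
  refine ⟨r, hr, fun k => ?_, fun n => ⟨_, hrx n⟩⟩
  obtain ⟨j, hj⟩ := mem_iUnion.1 (hrB ⟨k, rfl⟩)
  exact ⟨(hμ.monotone j.zero_le).trans hj.1, j + 1, hj.2⟩

theorem exists_comb {c : ℕ → CountableOrdinal} (hc : ∀ n, IsStationary (pinnedLimits b c n))
    (θ : CountableOrdinal) :
    ∃ (β : CountableOrdinal) (r : ℕ → Vtx) (len : ℕ → ℕ) (p : ℕ → ℕ → Vtx),
      IsRay (omegaGraph b) r ∧ range r ⊆ Prod.fst ⁻¹' Ioc θ β ∧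
      (∀ n, IsFinPath (omegaGraph b) (len n) (p n)) ∧ (∀ n, p n 0 ∈ range r) ∧
      (∀ n, p n (len n) = (c n, n)) ∧
      (∀ n, finPathSet (len n) (p n) ⊆ insert ((c n, n) : Vtx) (Prod.fst ⁻¹' Ioc θ β)) ∧
      ∀ m n, m ≠ n → Disjoint (finPathSet (len m) (p m)) (finPathSet (len n) (p n)) := by
  obtain ⟨C, hC⟩ := CountableOrdinal.exists_forall_le c
  obtain ⟨μ, hμ, hμ0, hμS⟩ := exists_strictMono_mem_pinnedLimits hc 1 (max θ C)
  obtain ⟨β, hβ⟩ := CountableOrdinal.exists_forall_le μ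
  have hμ0n : ∀ n, max θ C < μ n := fun n => hμ0.trans_le (hμ.monotone n.zero_le)
  have hθμ : ∀ n, θ < μ n := fun n => (le_max_left _ _).trans_lt (hμ0n n)
  have hcμ : ∀ m n, c m < μ n := fun m n => ((hC m).trans (le_max_right _ _)).trans_lt (hμ0n n)
  obtain ⟨r, hr, hrcol, he⟩ := hb.exists_isRay_through_columns hμ fun n => (hμS n).1
  choose e he using he
  choose len p hp hp0 hpc hpcol using fun n => exists_isFinPath_omegaGraph_column_ladder
    (hμS n).1 ((hμS n).2 n n.lt_succ_self).symm (hcμ n n) (e n)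
  refine ⟨β, r, len, p, hr, ?_, hp, fun n => (hp0 n).symm ▸ he n, hpc, fun n => ?_,
    fun m n hmn => (pairwise_disjoint_insert_column hcμ hμ.injective hmn).mono (hpcol m) (hpcol n)⟩
  · rintro _ ⟨k, rfl⟩
    obtain ⟨h0, j, hj⟩ := hrcol k
    exact ⟨(hθμ 0).trans_le h0, hj.le.trans (hβ j)⟩
  · refine (hpcol n).trans (insert_subset_insert fun v (hv : v.1 = μ n) => ?_)
    exact ⟨hv ▸ hθμ n, hv ▸ hβ n⟩

theorem hasStarOfRays : HasStarOfRays (omegaGraph b) ℵ₁ := by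
  obtain ⟨c, hc⟩ := hb.exists_isStationary_pinnedLimits
  obtain ⟨R, C, hR, hRc, hRC⟩ := exists_isRay_omegaGraph_through_pinned hc
  choose β leaf len p hleaf hleafA hp hp0 hpc hpA hdisj using hb.exists_comb hc
  have hι : #(omega1.{0}.ToType) = ℵ₁ := by rw [mk_toType, omega1, card_ord]
  obtain ⟨θ, hθ, hCθ, hsep⟩ := CountableOrdinal.exists_injective_separated hι.le β C
  have hA : Pairwise (Disjoint on fun i => (Prod.fst ⁻¹' Ioc (θ i) (β (θ i)) : Set Vtx)) := by
    intro i j hij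
    refine Disjoint.preimage _ (disjoint_left.2 fun x hxi hxj => ?_)
    rcases (hθ.ne hij).lt_or_gt with h | h
    · exact (hxi.2.trans_lt (hsep i j h)).not_ge hxj.1.le
    · exact (hxj.2.trans_lt (hsep j i h)).not_ge hxi.1.le
  have hAR : ∀ i, Disjoint (Prod.fst ⁻¹' Ioc (θ i) (β (θ i)) : Set Vtx) (range R) := by
    refine fun i => disjoint_left.2 ?_
    rintro v hv ⟨k, rfl⟩
    exact ((hRC k).trans_lt (hCθ i)).not_ge hv.1.le
  exact ⟨_, R, fun i => leaf (θ i), hι,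
    isStarOfRays_of_pairwise_disjoint _ hA hAR hR (fun i => hleaf _)
      (fun i => hleafA _) (fun i => hp _) (fun i => hp0 _) (fun i n => hpc _ n ▸ hRc n)
      (fun i n => (hpA _ n).trans (insert_subset_iff.2 ⟨Or.inr (hRc n), subset_union_left⟩))
      (fun i => hdisj _)⟩

end IsLadderSystem

theorem omegaGraph_has_aleph1_star_general (b : Ordinal → ℕ → Ordinal)
    (hlt : ∀ α : Ordinal, α < omega1 → Order.IsSuccLimit α → ∀ n, b α n < α)
    (hconv : ∀ α : Ordinal, α < omega1 → Order.IsSuccLimit α → ∀ γ < α, ∃ n, γ ≤ b α n) :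
    ∃ (ι : Type) (R : ℕ → Vtx) (leaf : ι → ℕ → Vtx),
      Cardinal.mk ι = Cardinal.aleph 1 ∧
      IsStarOfRays (omegaGraph b) R leaf ∧
      (∀ i, RayEquiv (omegaGraph b) (leaf i) R) := by
  obtain ⟨ι, R, leaf, hι, hstar⟩ := IsLadderSystem.hasStarOfRays ⟨hlt, hconv⟩
  exact ⟨ι, R, leaf, hι, hstar, hstar.rayEquiv⟩

/-- The graph `ω₁ # ℕ` contains an ℵ₁-star of rays all belonging to its unique
end; hence it satisfies Halin's Degree Conjecture for that end of degree ℵ₁. -/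
theorem omegaGraph_has_aleph1_star (b : Ordinal → ℕ → Ordinal)
    (hmono : ∀ α : Ordinal, α < omega1 → Order.IsSuccLimit α → StrictMono (b α))
    (hlt : ∀ α : Ordinal, α < omega1 → Order.IsSuccLimit α → ∀ n, b α n < α)
    (hconv : ∀ α : Ordinal, α < omega1 → Order.IsSuccLimit α → ∀ γ < α, ∃ n, γ ≤ b α n) :
    ∃ (ι : Type) (R : ℕ → Vtx) (leaf : ι → ℕ → Vtx),
      Cardinal.mk ι = Cardinal.aleph 1 ∧
      IsStarOfRays (omegaGraph b) R leaf ∧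
      (∀ i, RayEquiv (omegaGraph b) (leaf i) R) :=
  omegaGraph_has_aleph1_star_general b hlt hconv
end

section
/- Let T be a semi-special ω₁-Aronszajn tree, G = T # ℕ its ray inflation. Then G has exactly one end ε, and deg(ε) = ℵ₁: the vertical rays R_t = {(t,n) : n ∈ ω} for t ranging over any uncountable antichain of T are pairwise disjoint and all equivalent, witnessing that the unique end has degree ℵ₁. -/
/-- Adjacency generating the ray inflation `T # ℕ` of a sparse `T`-graph:
vertical edges `{(t,n),(t,n+1)}`, predecessor edges `{(u,n),(v,n)}` when `u` is
the predecessor of `v`, and ladder edges `{(c v n, n),(v, n)}` for `v` at a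
limit level with ladder `c v`. -/
def inflRel {T : Type*} [PartialOrder T] (ht : T → Ordinal) (c : T → ℕ → T) :
    T × ℕ → T × ℕ → Prop := fun p q =>
  (p.1 = q.1 ∧ q.2 = p.2 + 1) ∨
  (p.2 = q.2 ∧ p.1 < q.1 ∧ ∀ s, s < q.1 → s ≤ p.1) ∨
  (p.2 = q.2 ∧ Order.IsSuccLimit (ht q.1) ∧ p.1 = c q.1 p.2)

/-- The ray inflation `T # ℕ` as a simple graph on `T × ℕ`. -/
def inflationGraph {T : Type*} [PartialOrder T] (ht : T → Ordinal)
    (c : T → ℕ → T) : SimpleGraph (T × ℕ) :=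
  SimpleGraph.fromRel (inflRel ht c)


section InflationAux

variable {T : Type} [PartialOrder T]

lemma ht_strictMono {ht : T → Ordinal} (hht : IsHeightFun ht) {s t : T} (h : s < t) :
    ht s < ht t := by
  have hmem : ht s + 1 ∈ (fun s => ht s + 1) '' {s | s < t} := ⟨s, h, rfl⟩
  have hb : BddAbove ((fun s => ht s + 1) '' {s | s < t}) :=
    Ordinal.bddAbove_of_small
  have h2 : ht s + 1 ≤ ht t := by
    rw [hht t]; exact le_csSup hb hmem
  exact lt_of_lt_of_le (by rw [Ordinal.add_one_eq_succ]; exact Order.lt_succ _) h2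

lemma exists_pred {ht : T → Ordinal} (hht : IsHeightFun ht)
    (hchain : ∀ t : T, IsChain (· ≤ ·) {s | s < t}) {t : T} {o : Ordinal}
    (h : ht t = Order.succ o) : ∃ s, s < t ∧ ∀ u, u < t → u ≤ s := by
  set X := (fun s => ht s + 1) '' {s | s < t} with hX
  have hb : BddAbove X := Ordinal.bddAbove_of_small
  have hsup : sSup X = Order.succ o := by rw [← hht t, h]
  have hne : X.Nonempty := by
    by_contra hemp
    rw [Set.not_nonempty_iff_eq_empty] at hemp
    rw [hemp, csSup_empty] at hsup
    exact (Order.succ_ne_bot o) hsup.symm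
  have hex : ∃ s, s < t ∧ ht s = o := by
    by_contra hno
    push_neg at hno
    have : sSup X ≤ o := by
      apply csSup_le hne
      rintro x ⟨s, hs, rfl⟩
      have h1 : ht s + 1 ≤ Order.succ o := hsup ▸ le_csSup hb ⟨s, hs, rfl⟩
      rw [Ordinal.add_one_eq_succ] at h1
      have h2 : ht s ≤ o := by
        rcases lt_or_eq_of_le (Order.succ_le_succ_iff.mp h1) with h' | h'
        · exact le_of_lt h'
        · exact absurd h' (hno s hs)
      have h3 : ht s < o := lt_of_le_of_ne h2 (hno s hs)
      show ht s + 1 ≤ o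
      rw [Ordinal.add_one_eq_succ]
      exact Order.succ_le_of_lt h3
    rw [hsup] at this
    exact absurd this (not_le_of_gt (Order.lt_succ o))
  obtain ⟨s, hst, hso⟩ := hex
  refine ⟨s, hst, fun u hu => ?_⟩
  rcases eq_or_ne u s with rfl | hus
  · exact le_rfl
  rcases (hchain t) hu hst hus with h' | h'
  · exact h'
  · exfalso
    have : s < u := lt_of_le_of_ne h' (Ne.symm hus)
    have h1 : ht u + 1 ≤ Order.succ o := hsup ▸ le_csSup hb ⟨u, hu, rfl⟩
    rw [Ordinal.add_one_eq_succ] at h1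
    have h2 : ht u ≤ o := Order.succ_le_succ_iff.mp h1
    have h3 : o < ht u := hso ▸ ht_strictMono hht this
    exact absurd h2 (not_le_of_gt h3)

variable (ht : T → Ordinal) (c : T → ℕ → T)

lemma infl_adj_vert (t : T) (n : ℕ) : (inflationGraph ht c).Adj (t, n) (t, n + 1) := by
  rw [inflationGraph, SimpleGraph.fromRel_adj]
  exact ⟨by simp, Or.inl (Or.inl ⟨rfl, rfl⟩)⟩

lemma infl_adj_pred {s t : T} (h1 : s < t) (h2 : ∀ u, u < t → u ≤ s) (n : ℕ) :
    (inflationGraph ht c).Adj (s, n) (t, n) := by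
  rw [inflationGraph, SimpleGraph.fromRel_adj]
  exact ⟨by simp [ne_of_lt h1], Or.inl (Or.inr (Or.inl ⟨rfl, h1, h2⟩))⟩

lemma infl_adj_ladder {t : T} (hlim : Order.IsSuccLimit (ht t)) (n : ℕ) (hne : c t n ≠ t) :
    (inflationGraph ht c).Adj (c t n, n) (t, n) := by
  rw [inflationGraph, SimpleGraph.fromRel_adj]
  exact ⟨by simp [hne], Or.inl (Or.inr (Or.inr ⟨rfl, hlim, rfl⟩))⟩

lemma induce_adj {S : Set (T × ℕ)} {a b : T × ℕ} (ha : a ∈ S) (hb : b ∈ S)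
    (h : (inflationGraph ht c).Adj a b) :
    ((inflationGraph ht c).induce S).Adj ⟨a, ha⟩ ⟨b, hb⟩ := by
  simpa [SimpleGraph.comap_adj] using h

/-- Descent within a level that avoids `S`: every `(t, n)` reaches the root. -/
lemma descend (hht : IsHeightFun ht)
    (hchain : ∀ t : T, IsChain (· ≤ ·) {s | s < t})
    (hwf : WellFoundedLT T)
    (hlt : ∀ v : T, Order.IsSuccLimit (ht v) → ∀ n, c v n < v)
    {r0 : T} (hr0 : ∀ t, r0 ≤ t)
    (S : Set (T × ℕ)) (n : ℕ) (hn : ∀ x : T, (x, n) ∈ Sᶜ) (t : T) :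
    ((inflationGraph ht c).induce Sᶜ).Reachable ⟨(t, n), hn t⟩ ⟨(r0, n), hn r0⟩ := by
  induction t using hwf.wf.induction with
  | _ t IH =>
    rcases eq_or_ne t r0 with rfl | hne
    · exact SimpleGraph.Reachable.refl _
    have hr0t : r0 < t := lt_of_le_of_ne (hr0 t) (Ne.symm hne)
    rcases Ordinal.zero_or_succ_or_isSuccLimit (ht t) with h0 | ⟨o, ho⟩ | hlim
    · exfalso
      have := ht_strictMono hht hr0t
      rw [h0] at this
      exact absurd this (not_lt_zero)
    · obtain ⟨s, hst, hmax⟩ := exists_pred hht hchain ho.symm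
      exact ((induce_adj ht c (hn s) (hn t)
        (infl_adj_pred ht c hst hmax n)).reachable.symm).trans (IH s hst)
    · have hc := hlt t hlim n
      exact ((induce_adj ht c (hn (c t n)) (hn t)
        (infl_adj_ladder ht c hlim n (ne_of_lt hc))).reachable.symm).trans (IH _ hc)

/-- Vertical reachability avoiding `S`. -/
lemma vert_reach (S : Set (T × ℕ)) (t : T) {a b : ℕ} (hab : a ≤ b)
    (h : ∀ m, a ≤ m → ((t, m) : T × ℕ) ∈ Sᶜ) :
    ((inflationGraph ht c).induce Sᶜ).Reachable ⟨(t, a), h a le_rfl⟩ ⟨(t, b), h b hab⟩ := by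
  induction b, hab using Nat.le_induction with
  | base => exact SimpleGraph.Reachable.refl _
  | succ b hb IH =>
    exact IH.trans (induce_adj ht c (h b hb) (h (b + 1) (by omega))
      (infl_adj_vert ht c t b)).reachable


universe u in
lemma mk_le_aleph_one {T : Type} [PartialOrder T] {ht : T → Ordinal.{u}}
    (hω : IsOmegaOneTree ht) : Cardinal.mk T ≤ Cardinal.aleph 1 := by
  have hcnt : ∀ o : Ordinal.{u}, Countable {t : T | ht t = o} :=
    fun o => (hω.2.2 o).to_subtype
  have hex : ∀ o : Ordinal.{u}, ∃ f : {t : T | ht t = o} → ℕ, Function.Injective f :=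
    fun o => exists_injective_nat _
  choose e he using hex
  have hcast : ∀ (a : T) (o : Ordinal.{u}) (h : ht a = o),
      e o ⟨a, h⟩ = e (ht a) ⟨a, rfl⟩ := by
    intro a o h; subst h; rfl
  have hF : Function.Injective
      (fun t : T => ((⟨ht t, hω.1 t⟩ : Set.Iio (omega1 : Ordinal.{u})),
        e (ht t) ⟨t, rfl⟩)) := by
    intro a b hab
    have h1 : ht a = ht b := Subtype.ext_iff.mp (congrArg Prod.fst hab)
    have h2 : e (ht a) ⟨a, rfl⟩ = e (ht b) ⟨b, rfl⟩ := congrArg Prod.snd hab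
    rw [← hcast a (ht b) h1] at h2
    exact congrArg Subtype.val (he (ht b) h2)
  have hle := Cardinal.lift_mk_le'.mpr ⟨⟨_, hF⟩⟩
  have hX : Cardinal.mk (Set.Iio (omega1 : Ordinal.{u}) × ℕ) = Cardinal.aleph 1 := by
    rw [Cardinal.mk_prod, Ordinal.mk_Iio_ordinal]
    have h1 : (omega1 : Ordinal.{u}).card = Cardinal.aleph 1 := by
      rw [omega1, Cardinal.card_ord]
    rw [h1, Cardinal.lift_aleph, Cardinal.lift_aleph]
    simp only [Ordinal.lift_one, Cardinal.mk_nat, Cardinal.lift_aleph0]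
    rw [Cardinal.mul_eq_left (Cardinal.aleph0_le_aleph 1)
      (Cardinal.aleph0_le_aleph 1) Cardinal.aleph0_ne_zero]
  rw [hX] at hle
  have h2 : Cardinal.lift.{u + 1, 0} (Cardinal.aleph 1) = Cardinal.aleph 1 := by
    rw [Cardinal.lift_aleph, Ordinal.lift_one]
  rw [← Cardinal.lift_le.{u + 1}, h2]
  calc Cardinal.lift.{u + 1, 0} (Cardinal.mk T)
      ≤ Cardinal.lift.{0, u + 1} (Cardinal.aleph 1) := hle
    _ = Cardinal.aleph 1 := Cardinal.lift_uzero _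

end InflationAux

set_option maxHeartbeats 1000000 in
/-- For a semi-special ω₁-Aronszajn tree `T`, the ray inflation `G = T # ℕ` has
exactly one end and that end has degree ℵ₁: all rays of `G` are equivalent, the
vertical rays over any uncountable antichain of `T` are pairwise disjoint
equivalent rays, and every family of pairwise disjoint rays has size at most ℵ₁. -/
theorem inflation_one_end_degree_aleph1 {T : Type} [PartialOrder T]
    (ht : T → Ordinal) (htree : IsOrderTree T) (hht : IsHeightFun ht)
    (hω : IsOmegaOneTree ht) (haron : NoUncountableBranch T)
    (A : ℕ → Set T) (hanti : ∀ n, IsAntichain (· ≤ ·) (A n))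
    (hcover : {t : T | IsSuccNode t} ⊆ ⋃ n, A n)
    (c : T → ℕ → T)
    (hlt : ∀ v : T, Order.IsSuccLimit (ht v) → ∀ n, c v n < v)
    (hcof : ∀ v : T, Order.IsSuccLimit (ht v) → ∀ s, s < v → ∃ n, s ≤ c v n) :
    (∃ r : ℕ → T × ℕ, IsRay (inflationGraph ht c) r) ∧
    (∀ r s : ℕ → T × ℕ, IsRay (inflationGraph ht c) r →
      IsRay (inflationGraph ht c) s → RayEquiv (inflationGraph ht c) r s) ∧
    (∀ B : Set T, ¬ B.Countable → IsAntichain (· ≤ ·) B →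
      (∀ t ∈ B, IsRay (inflationGraph ht c) (fun n => (t, n))) ∧
      (∀ t ∈ B, ∀ t' ∈ B, t ≠ t' →
        Disjoint (Set.range (fun n : ℕ => ((t, n) : T × ℕ)))
          (Set.range (fun n : ℕ => ((t', n) : T × ℕ)))) ∧
      (∀ t ∈ B, ∀ t' ∈ B, RayEquiv (inflationGraph ht c)
        (fun n => (t, n)) (fun n => (t', n)))) ∧
    (∀ (ι : Type) (r : ι → ℕ → T × ℕ),
      (∀ i, IsRay (inflationGraph ht c) (r i)) →
      (∀ i j, i ≠ j → Disjoint (Set.range (r i)) (Set.range (r j))) →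
      Cardinal.mk ι ≤ Cardinal.aleph 1) := by
  obtain ⟨⟨r0, hr0⟩, hchain, hwf⟩ := htree
  -- vertical rays
  have vertRay : ∀ t : T, IsRay (inflationGraph ht c) (fun n => ((t, n) : T × ℕ)) := by
    intro t
    refine ⟨fun a b hab => ?_, fun n => infl_adj_vert ht c t n⟩
    simpa using congrArg Prod.snd hab
  -- all rays are equivalent
  have equiv : ∀ r s : ℕ → T × ℕ, IsRay (inflationGraph ht c) r →
      IsRay (inflationGraph ht c) s → RayEquiv (inflationGraph ht c) r s := by
    intro r s hr hs S hS
    obtain ⟨N, hN⟩ : ∃ N : ℕ, ∀ p ∈ S, p.2 < N := by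
      obtain ⟨N0, hN0⟩ := (hS.image Prod.snd).bddAbove
      exact ⟨N0 + 1, fun p hp => Nat.lt_succ_of_le (hN0 ⟨p, hp, rfl⟩)⟩
    set Bad : Set (T × ℕ) := {p | ∃ q ∈ S, q.1 = p.1 ∧ p.2 ≤ q.2} with hBad
    have hBadfin : Bad.Finite := by
      have hsub : Bad ⊆ ⋃ q ∈ S, (fun m => ((q.1, m) : T × ℕ)) '' Set.Iic q.2 := by
        rintro ⟨x, m⟩ ⟨q, hq, h1, h2⟩
        exact Set.mem_biUnion hq ⟨m, h2, by simp [h1]⟩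
      exact (Set.Finite.biUnion hS (fun q _ => (Set.finite_Iic q.2).image _)).subset hsub
    have pick : ∀ u : ℕ → T × ℕ, Function.Injective u →
        ∃ i : ℕ, ∀ m, (u i).2 ≤ m → ((u i).1, m) ∉ S := by
      intro u hu
      have hfin : {i | u i ∈ Bad}.Finite := hBadfin.preimage hu.injOn
      obtain ⟨i, hi⟩ := hfin.infinite_compl.nonempty
      exact ⟨i, fun m hm hmem => hi ⟨((u i).1, m), hmem, rfl, hm⟩⟩
    obtain ⟨i, hi⟩ := pick r hr.1
    obtain ⟨j, hj⟩ := pick s hs.1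
    have hriS : r i ∈ Sᶜ := hi (r i).2 le_rfl
    have hsjS : s j ∈ Sᶜ := hj (s j).2 le_rfl
    set n := (r i).2 with hn
    set n' := (s j).2 with hn'
    set M := max n N with hM
    set M' := max n' N with hM'
    set Mx := max M M' with hMx
    have hNM : N ≤ M := le_max_right _ _
    have hNM' : N ≤ M' := le_max_right _ _
    have hlevel : ∀ K : ℕ, N ≤ K → ∀ x : T, ((x, K) : T × ℕ) ∈ Sᶜ :=
      fun K hK x hmem => absurd (hN _ hmem) (not_lt.mpr hK)
    have c1 := vert_reach ht c S (r i).1 (le_max_left n N) (fun m hm => hi m hm)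
    have c2 := descend ht c hht hchain hwf hlt hr0 S M (hlevel M hNM) (r i).1
    have c3 := vert_reach ht c S r0 (le_max_left M M')
      (fun m hm => hlevel m (le_trans hNM hm) r0)
    have d1 := vert_reach ht c S (s j).1 (le_max_left n' N) (fun m hm => hj m hm)
    have d2 := descend ht c hht hchain hwf hlt hr0 S M' (hlevel M' hNM') (s j).1
    have d3 := vert_reach ht c S r0 (le_max_right M M')
      (fun m hm => hlevel m (le_trans hNM' hm) r0)
    exact ⟨i, j, hriS, hsjS,
      (((c1.trans c2).trans c3).trans (((d1.trans d2).trans d3).symm))⟩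
  refine ⟨⟨fun k => (r0, k), vertRay r0⟩, equiv, ?_, ?_⟩
  · intro B _ _
    refine ⟨fun t _ => vertRay t, ?_, fun t _ t' _ => equiv _ _ (vertRay t) (vertRay t')⟩
    intro t _ t' _ htt'
    rw [Set.disjoint_left]
    rintro x ⟨a, rfl⟩ ⟨b, hb⟩
    exact htt' (congrArg Prod.fst hb).symm
  · intro ι r hray hdisj
    have hinj : Function.Injective (fun i => r i 0) := by
      intro a b hab
      by_contra hne
      exact Set.disjoint_left.mp (hdisj a b hne) ⟨0, rfl⟩ ⟨0, hab.symm⟩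
    have h1 : Cardinal.mk ι ≤ Cardinal.mk (T × ℕ) := Cardinal.mk_le_of_injective hinj
    have hT : Cardinal.mk T ≤ Cardinal.aleph 1 := mk_le_aleph_one hω
    have h2 : Cardinal.mk (T × ℕ) ≤ Cardinal.aleph 1 := by
      have := Cardinal.mul_le_max (Cardinal.mk T) (Cardinal.mk ℕ)
      calc Cardinal.mk (T × ℕ) = Cardinal.mk T * Cardinal.mk ℕ := by
            simpa using (Cardinal.mk_prod T ℕ)
        _ ≤ max (max (Cardinal.mk T) (Cardinal.mk ℕ)) Cardinal.aleph0 :=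
            Cardinal.mul_le_max _ _
        _ ≤ Cardinal.aleph 1 := by
            refine max_le (max_le hT ?_) (Cardinal.aleph0_le_aleph 1)
            simpa using Cardinal.aleph0_le_aleph 1
    exact h1.trans h2
end
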